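/- arXiv:2008.05059 — 8 statements merged into one kernel-verified Lean document; each statement's English description precedes it below -/
import Mathlib

section
/- Let Q be the uniform distribution on 𝒬 = {x ∈ F_2^3 : x1+x2+x3 = 0}, let V ≤ F_2^n be a linear subspace, let W = v + V^3 be an affine shift with Q^n(W) > 0, let P̃ = Q^n | W, and suppose S ⊆ [n] is a nonempty set such that membership in V is defined by equations x·A = 0 where ∑_{j∈S} A_j = 0 (A_j the rows of a matrix A ∈ F_2^{n×m}). Then for every j ∈ S, the marginal distribution of the j-th column X^j under P̃ is exactly Q (uniform on 𝒬). -/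
/-!
Adding the same vector `d ∈ 𝒬` to every column indexed by `S` preserves the support of `P̃`:
columns stay in `𝒬`, and each row moves by `d i • 𝟙_S ∈ V` since `∑_{j∈S} A_j = 0`. For `j ∈ S` this
translation moves column `j` by `d`, so all four fibres of `x ↦ X^j` over `𝒬` have the same size.
-/

open Finset

namespace Finset

variable {α β : Type*}

lemma card_filter_eq_of_add_mem_iff [AddGroup α] {s : Finset α} {t : α}
    (hs : ∀ x, x + t ∈ s ↔ x ∈ s) {p p' : α → Prop} [DecidablePred p] [DecidablePred p']
    (hp : ∀ x, p' (x + t) ↔ p x) :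
    #{x ∈ s | p x} = #{x ∈ s | p' x} := by
  refine card_bij' (fun x _ ↦ x + t) (fun x _ ↦ x - t) (fun x hx ↦ ?_) (fun x hx ↦ ?_)
    (fun x _ ↦ add_sub_cancel_right x t) (fun x _ ↦ sub_add_cancel x t)
  · rw [mem_filter] at hx ⊢
    exact ⟨(hs x).2 hx.1, (hp x).2 hx.2⟩
  · rw [mem_filter] at hx ⊢
    rw [← hs, ← hp, sub_add_cancel]
    exact hx

lemma card_eq_card_mul_card_fiber_of_fibers_eq [DecidableEq β] {s : Finset α} {t : Finset β}
    {f : α → β} (hf : ∀ a ∈ s, f a ∈ t) {b : β}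
    (h : ∀ b' ∈ t, #{a ∈ s | f a = b'} = #{a ∈ s | f a = b}) :
    #s = #t * #{a ∈ s | f a = b} := by
  rw [card_eq_sum_card_fiberwise hf, sum_congr rfl h, sum_const, smul_eq_mul]

end Finset

section Support

variable {R : Type*} [CommRing R] {n m : ℕ}

/-- The support of `P̃ = Qⁿ | W`: columns in `𝒬` and rows `x i ∈ v i + V`, `V = {y : y ⬝ A = 0}`. -/
def InSupport (A : Fin n → Fin m → R) (v : Fin 3 → Fin n → R) (x : Fin 3 → Fin n → R) : Prop :=
  (∀ j', x 0 j' + x 1 j' + x 2 j' = 0) ∧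
    ∀ (i : Fin 3) (c : Fin m), ∑ j', (x i j' - v i j') * A j' c = 0

def shiftOn (S : Finset (Fin n)) (d : Fin 3 → R) : Fin 3 → Fin n → R :=
  fun i j' ↦ if j' ∈ S then d i else 0

lemma inSupport_add_shiftOn_iff {A : Fin n → Fin m → R} {v : Fin 3 → Fin n → R}
    {S : Finset (Fin n)} (hA : ∀ c, ∑ j' ∈ S, A j' c = 0) {d : Fin 3 → R}
    (hd : d 0 + d 1 + d 2 = 0) (x : Fin 3 → Fin n → R) :
    InSupport A v (x + shiftOn S d) ↔ InSupport A v x := by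
  have hcol : ∀ j', (x + shiftOn S d) 0 j' + (x + shiftOn S d) 1 j' + (x + shiftOn S d) 2 j'
      = x 0 j' + x 1 j' + x 2 j' := by
    intro j'
    by_cases h : j' ∈ S
    · simp only [shiftOn, Pi.add_apply, h, if_true]
      linear_combination hd
    · simp only [shiftOn, Pi.add_apply, h, if_false, add_zero]
  have hrow : ∀ i c, ∑ j', ((x + shiftOn S d) i j' - v i j') * A j' c
      = ∑ j', (x i j' - v i j') * A j' c := by
    intro i c
    simp only [shiftOn, Pi.add_apply, add_sub_right_comm, add_mul, sum_add_distrib, ite_mul,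
      zero_mul, sum_ite_mem, univ_inter, ← mul_sum, hA, mul_zero, add_zero]
  simp only [InSupport, hcol, hrow]

end Support

theorem stmt_3_general (n m : ℕ) (A : Fin n → Fin m → ZMod 2)
    (v : Fin 3 → Fin n → ZMod 2) (S : Finset (Fin n)) (j : Fin n)
    (hj : j ∈ S)
    (hA : ∀ c : Fin m, ∑ j' ∈ S, A j' c = 0)
    -- `T` is the support of `P̃`: matrices with columns in `𝒬` lying in `W = v + V³`
    (T : Finset (Fin 3 → Fin n → ZMod 2))
    (hT : T = Finset.univ.filter (fun x =>
      (∀ j' : Fin n, x 0 j' + x 1 j' + x 2 j' = 0) ∧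
      (∀ (i : Fin 3) (c : Fin m), ∑ j' : Fin n, (x i j' - v i j') * A j' c = 0)))
    (hTne : T.Nonempty) :
    ∀ q : Fin 3 → ZMod 2, q 0 + q 1 + q 2 = 0 →
      ((T.filter (fun x => ∀ i : Fin 3, x i j = q i)).card : ℝ) / (T.card : ℝ)
        = 1 / 4 := by
  intro q hq
  set 𝒬 : Finset (Fin 3 → ZMod 2) := {r | r 0 + r 1 + r 2 = 0}
  have hT' : ∀ x, x ∈ T ↔ InSupport A v x := by simp [hT, InSupport]
  simp only [← funext_iff]
  have hfibres : ∀ r ∈ 𝒬, #{x ∈ T | (fun i ↦ x i j) = r} = #{x ∈ T | (fun i ↦ x i j) = q} := by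
    intro r hr
    replace hr : r 0 + r 1 + r 2 = 0 := (mem_filter.1 hr).2
    refine card_filter_eq_of_add_mem_iff (t := shiftOn S (q - r)) (fun x ↦ ?_) (fun x ↦ ?_)
    · rw [hT', hT']
      refine inSupport_add_shiftOn_iff hA ?_ x
      simp only [Pi.sub_apply]
      linear_combination hq - hr
    · simp only [funext_iff, shiftOn, Pi.add_apply, hj, if_true, ← eq_sub_iff_add_eq,
        Pi.sub_apply, sub_sub_cancel]
  have hcard := card_eq_card_mul_card_fiber_of_fibers_eq
    (fun x hx ↦ mem_filter.2 ⟨mem_univ _, ((hT' x).1 hx).1 j⟩) hfibres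
  have h𝒬 : #𝒬 = 4 := by decide
  have hfibre_ne : #{x ∈ T | (fun i ↦ x i j) = q} ≠ 0 := by
    intro h0
    simp [h0, hTne.ne_empty] at hcard
  rw [hcard, h𝒬]
  push_cast
  field_simp

/-- Setup: `Q` is the GHZ query distribution on `F₂³` (uniform on triples summing
to `0`), `V = {x : x·A = 0} ≤ F₂ⁿ`, and `P̃ = Qⁿ` conditioned on the affine event
`W = v + V³`.  If `S ⊆ [n]` is nonempty with `∑_{j∈S} A_j = 0`, then for any
`j ∈ S`, the marginal distribution of the `j`-th column under `P̃` is exactly `Q`: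
each query triple `q` with `q₁+q₂+q₃ = 0` has conditional probability `1/4`. -/
theorem stmt_3 (n m : ℕ) (A : Fin n → Fin m → ZMod 2)
    (v : Fin 3 → Fin n → ZMod 2) (S : Finset (Fin n)) (j : Fin n)
    (hS : S.Nonempty) (hj : j ∈ S)
    (hA : ∀ c : Fin m, ∑ j' ∈ S, A j' c = 0)
    -- `T` is the support of `P̃`: matrices with columns in `𝒬` lying in `W = v + V³`
    (T : Finset (Fin 3 → Fin n → ZMod 2))
    (hT : T = Finset.univ.filter (fun x =>
      (∀ j' : Fin n, x 0 j' + x 1 j' + x 2 j' = 0) ∧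
      (∀ (i : Fin 3) (c : Fin m), ∑ j' : Fin n, (x i j' - v i j') * A j' c = 0)))
    (hTne : T.Nonempty) :
    ∀ q : Fin 3 → ZMod 2, q 0 + q 1 + q 2 = 0 →
      ((T.filter (fun x => ∀ i : Fin 3, x i j = q i)).card : ℝ) / (T.card : ℝ)
        = 1 / 4 :=
  stmt_3_general n m A v S j hj hA T hT hTne
end

section
/- With the setup of the previous statement (P̃ = Q^n conditioned on the affine event W = v + V^3, where V = {x : x·A = 0} and ∑_{j∈S}A_j = 0 for a nonempty S ⊆ [n]), fix j ∈ S and let Δ^{(j)} = (X^{j'} − X^{j})_{j'∈S∖{j}}. Then under P̃, the random variables X^j and (Δ^{(j)}, X^{[n]∖S}) are independent. -/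
/-!
The support `T` of `P̃` is a rectangle in the coordinates `(X^j, g X)`: the pair determines `X`,
and for `x, y ∈ T` the point obtained from `y` by adding the column `x^j - y^j` to every column
indexed by `S` lies again in `T` (the parity condition holds column by column, and the affine
constraints are preserved because `∑_{j' ∈ S} A_{j'} = 0`); it has column `x^j` at `j` and the same
`g`-value as `y`. On a rectangle the uniform distribution is the product of its marginals.
-/

open Finset

section Rectangle

variable {α β γ : Type*} [DecidableEq β] [DecidableEq γ]
  {T : Finset α} {f : α → β} {g : α → γ}

theorem card_filter_comp_and_comp_of_rectangle
    (hinj : Set.InjOn (fun x => (f x, g x)) T)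
    (hrect : ∀ x ∈ T, ∀ y ∈ T, ∃ z ∈ T, f z = f x ∧ g z = g y)
    (p : β → Prop) (r : γ → Prop) [DecidablePred p] [DecidablePred r] :
    #(T.filter fun x => p (f x) ∧ r (g x)) =
      #((T.image f).filter p) * #((T.image g).filter r) := by
  rw [← card_product, ← filter_product]
  refine card_nbij (fun x => (f x, g x)) (fun x hx => ?_) (hinj.mono (filter_subset _ T)) ?_
  · obtain ⟨hxT, hx⟩ := mem_filter.mp hx
    exact mem_filter.mpr ⟨mem_product.mpr ⟨mem_image_of_mem f hxT, mem_image_of_mem g hxT⟩, hx⟩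
  · rintro ⟨c, d⟩ hcd
    simp only [coe_filter, mem_product, mem_image, Set.mem_ofPred_eq] at hcd
    obtain ⟨⟨⟨x, hx, rfl⟩, ⟨y, hy, rfl⟩⟩, hpr⟩ := hcd
    obtain ⟨z, hz, hzx, hzy⟩ := hrect x hx y hy
    exact ⟨z, by simp [hz, hzx, hzy, hpr], by simp [hzx, hzy]⟩

theorem card_filter_comp_and_comp_mul_card_of_rectangle
    (hinj : Set.InjOn (fun x => (f x, g x)) T)
    (hrect : ∀ x ∈ T, ∀ y ∈ T, ∃ z ∈ T, f z = f x ∧ g z = g y)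
    (p : β → Prop) (r : γ → Prop) [DecidablePred p] [DecidablePred r] :
    #(T.filter fun x => p (f x) ∧ r (g x)) * #T =
      #(T.filter fun x => p (f x)) * #(T.filter fun x => r (g x)) := by
  have key := card_filter_comp_and_comp_of_rectangle hinj hrect
  have hT := key (fun _ => True) (fun _ => True)
  have hp := key p (fun _ => True)
  have hr := key (fun _ => True) r
  simp only [and_true, true_and, filter_true_of_mem fun _ _ => trivial] at hT hp hr
  rw [key, hT, hp, hr]
  ring

end Rectangle

section Columns

variable {ι κ G : Type*} [DecidableEq κ]

/-- `Δ^{(j)}` on the columns in `S`, and the columns themselves outside `S`. -/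
def relColumns [Sub G] (S : Finset κ) (j : κ) (x : ι → κ → G) : κ → ι → G :=
  fun j' i => if j' ∈ S then x i j' - x i j else x i j'

def shiftColumns [Add G] (S : Finset κ) (c : ι → G) (x : ι → κ → G) : ι → κ → G :=
  fun i j' => if j' ∈ S then x i j' + c i else x i j'

theorem injective_column_relColumns [AddGroup G] (S : Finset κ) (j : κ) :
    Function.Injective fun x : ι → κ → G => (fun i => x i j, relColumns S j x) := by
  intro x y hxy
  simp only [Prod.mk.injEq, funext_iff, relColumns] at hxy
  obtain ⟨hcol, hrel⟩ := hxy
  funext i j'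
  have h := hrel j' i
  split_ifs at h
  · simpa [hcol i] using h
  · exact h

theorem relColumns_shiftColumns [AddCommGroup G] {S : Finset κ} {j : κ} (hj : j ∈ S)
    (c : ι → G) (x : ι → κ → G) :
    relColumns S j (shiftColumns S c x) = relColumns S j x := by
  funext j' i
  by_cases hj' : j' ∈ S <;> simp [relColumns, shiftColumns, hj, hj']

theorem shiftColumns_apply_of_mem [Add G] {S : Finset κ} {j : κ} (hj : j ∈ S)
    (c : ι → G) (x : ι → κ → G) (i : ι) : shiftColumns S c x i j = x i j + c i := if_pos hj

theorem sum_shiftColumns_eq_zero [Fintype ι] [AddCommMonoid G] {S : Finset κ} {c : ι → G}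
    (hc : ∑ i, c i = 0) {x : ι → κ → G} (hx : ∀ j', ∑ i, x i j' = 0) (j' : κ) :
    ∑ i, shiftColumns S c x i j' = 0 := by
  by_cases hj' : j' ∈ S <;> simp [shiftColumns, hj', sum_add_distrib, hx j', hc]

theorem sum_sub_shiftColumns_mul [Fintype κ] {R μ : Type*} [CommRing R] {S : Finset κ}
    {A : κ → μ → R} (hA : ∀ k, ∑ j' ∈ S, A j' k = 0) (c : ι → R) (x v : ι → κ → R)
    (i : ι) (k : μ) :
    ∑ j', (shiftColumns S c x i j' - v i j') * A j' k = ∑ j', (x i j' - v i j') * A j' k := by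
  have hshift : ∀ j', (shiftColumns S c x i j' - v i j') * A j' k =
      (x i j' - v i j') * A j' k + if j' ∈ S then c i * A j' k else 0 := by
    intro j'
    by_cases hj' : j' ∈ S
    · simp only [shiftColumns, hj', if_true]; ring
    · simp [shiftColumns, hj']
  rw [sum_congr rfl fun j' _ => hshift j', sum_add_distrib, ← sum_filter, filter_mem_eq_inter,
    univ_inter, ← mul_sum, hA, mul_zero, add_zero]

end Columns

section Support

variable {ι κ μ R : Type*} [Fintype ι] [Fintype κ] [DecidableEq κ] [CommRing R]

/-- Membership in the support of `Qⁿ` (every column sums to zero) and in `W = v + V^ι`. -/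
def InAffineSupport (A : κ → μ → R) (v : ι → κ → R) (x : ι → κ → R) : Prop :=
  (∀ j', ∑ i, x i j' = 0) ∧ ∀ i k, ∑ j', (x i j' - v i j') * A j' k = 0

theorem exists_inAffineSupport_column_eq_relColumns_eq {A : κ → μ → R} {v : ι → κ → R}
    {S : Finset κ} (hA : ∀ k, ∑ j' ∈ S, A j' k = 0) {j : κ} (hj : j ∈ S) {x y : ι → κ → R}
    (hx : InAffineSupport A v x) (hy : InAffineSupport A v y) :
    ∃ z, InAffineSupport A v z ∧ (fun i => z i j) = (fun i => x i j) ∧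
      relColumns S j z = relColumns S j y := by
  have hc : ∑ i, (x i j - y i j) = 0 := by rw [sum_sub_distrib, hx.1, hy.1, sub_zero]
  refine ⟨shiftColumns S (fun i => x i j - y i j) y, ⟨sum_shiftColumns_eq_zero hc hy.1,
    fun i k => by rw [sum_sub_shiftColumns_mul hA, hy.2]⟩, ?_, relColumns_shiftColumns hj _ _⟩
  funext i
  rw [shiftColumns_apply_of_mem hj]
  abel

end Support

theorem stmt_4_general (n m : ℕ) (A : Fin n → Fin m → ZMod 2)
    (v : Fin 3 → Fin n → ZMod 2) (S : Finset (Fin n)) (j : Fin n)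
    (hj : j ∈ S)
    (hA : ∀ c : Fin m, ∑ j' ∈ S, A j' c = 0)
    (T : Finset (Fin 3 → Fin n → ZMod 2))
    (hT : T = Finset.univ.filter (fun x =>
      (∀ j' : Fin n, x 0 j' + x 1 j' + x 2 j' = 0) ∧
      (∀ (i : Fin 3) (c : Fin m), ∑ j' : Fin n, (x i j' - v i j') * A j' c = 0)))
    (g : (Fin 3 → Fin n → ZMod 2) → Fin n → Fin 3 → ZMod 2)
    (hg : ∀ x j' i, g x j' i = if j' ∈ S then x i j' - x i j else x i j') :
    ∀ (q : Fin 3 → ZMod 2) (b : Fin n → Fin 3 → ZMod 2),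
      ((T.filter (fun x => (∀ i : Fin 3, x i j = q i) ∧ g x = b)).card : ℝ) *
          (T.card : ℝ) =
        ((T.filter (fun x => ∀ i : Fin 3, x i j = q i)).card : ℝ) *
          ((T.filter (fun x => g x = b)).card : ℝ) := by
  intro q b
  obtain rfl : g = relColumns S j := funext fun x => funext fun j' => funext (hg x j')
  have hmem : ∀ x ∈ T, InAffineSupport A v x := by
    intro x hx
    rw [hT, mem_filter] at hx
    simpa [InAffineSupport, Fin.sum_univ_three] using hx.2
  have hrect : ∀ x ∈ T, ∀ y ∈ T, ∃ z ∈ T,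
      (fun i => z i j) = (fun i => x i j) ∧ relColumns S j z = relColumns S j y := by
    intro x hx y hy
    obtain ⟨z, hz, hzx, hzy⟩ :=
      exists_inAffineSupport_column_eq_relColumns_eq hA hj (hmem x hx) (hmem y hy)
    refine ⟨z, ?_, hzx, hzy⟩
    rw [hT, mem_filter]
    simpa [InAffineSupport, Fin.sum_univ_three] using hz
  exact_mod_cast card_filter_comp_and_comp_mul_card_of_rectangle
    (injective_column_relColumns S j).injOn hrect (fun c => ∀ i, c i = q i) (· = b)

/-- Setup as in the affine-conditioning lemma: `P̃ = Qⁿ | (X ∈ W)` where `Q` is the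
GHZ query distribution, `W = v + V³`, `V = {x : x·A = 0}`, and `S` is a nonempty set
of coordinates with `∑_{j∈S} A_j = 0`.  For `j ∈ S`, under `P̃` the column `X^j` is
independent of the data `(Δ^{(j)}, X^{[n]∖S})`, where
`Δ^{(j)} = (X^{j'} − X^{j})_{j'∈S∖{j}}`.  Independence is stated as the product rule
for the uniform distribution on the support `T` of `P̃`, with the data encoded by
`g(x) : Fin n → F₂³`, `g(x)_{j'} = X^{j'} − X^{j}` for `j' ∈ S` and `X^{j'}` else. -/
theorem stmt_4 (n m : ℕ) (A : Fin n → Fin m → ZMod 2)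
    (v : Fin 3 → Fin n → ZMod 2) (S : Finset (Fin n)) (j : Fin n)
    (hS : S.Nonempty) (hj : j ∈ S)
    (hA : ∀ c : Fin m, ∑ j' ∈ S, A j' c = 0)
    (T : Finset (Fin 3 → Fin n → ZMod 2))
    (hT : T = Finset.univ.filter (fun x =>
      (∀ j' : Fin n, x 0 j' + x 1 j' + x 2 j' = 0) ∧
      (∀ (i : Fin 3) (c : Fin m), ∑ j' : Fin n, (x i j' - v i j') * A j' c = 0)))
    (hTne : T.Nonempty)
    (g : (Fin 3 → Fin n → ZMod 2) → Fin n → Fin 3 → ZMod 2)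
    (hg : ∀ x j' i, g x j' i = if j' ∈ S then x i j' - x i j else x i j') :
    ∀ (q : Fin 3 → ZMod 2) (b : Fin n → Fin 3 → ZMod 2),
      ((T.filter (fun x => (∀ i : Fin 3, x i j = q i) ∧ g x = b)).card : ℝ) *
          (T.card : ℝ) =
        ((T.filter (fun x => ∀ i : Fin 3, x i j = q i)).card : ℝ) *
          ((T.filter (fun x => g x = b)).card : ℝ) :=
  stmt_4_general n m A v S j hj hA T hT g hg
end

section
/- Let P and Q be probability distributions on a finite set Ω and let E ⊆ Ω be an event with P(E) > 0 and Q(E) > 0. Then the total variation distance of the conditional distributions satisfies d_TV(P|E, Q|E) ≤ 2·d_TV(P,Q)/P(E). -/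
/-!
Write `p = P(E)`, `q = Q(E)`. On `E`,
`P ω / p - Q ω / q = (P ω - Q ω) / p + Q ω (q - p) / (p q)`; summing absolute values over `E`,
the second terms add up to `|q - p| / p`, and `|q - p| ≤ ∑_{ω ∈ E} |P ω - Q ω|`. Hence
`∑_{ω ∈ E} |P ω / p - Q ω / q| ≤ 2 ∑_{ω ∈ E} |P ω - Q ω| / p ≤ 4 d_TV(P, Q) / p`.
-/

open Finset

lemma abs_div_sub_div_le {x y p q : ℝ} (hp : 0 < p) (hq : 0 < q) (hy : 0 ≤ y) :
    |x / p - y / q| ≤ |x - y| / p + y * |q - p| / (p * q) := by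
  have hsplit : x / p - y / q = (x - y) / p + y * (q - p) / (p * q) := by
    field_simp
    ring
  calc |x / p - y / q| ≤ |(x - y) / p| + |y * (q - p) / (p * q)| := hsplit ▸ abs_add_le _ _
    _ = |x - y| / p + y * |q - p| / (p * q) := by
      rw [abs_div, abs_div, abs_mul, abs_of_nonneg hy, abs_of_pos hp, abs_of_pos (mul_pos hp hq)]

lemma abs_sum_sub_sum_le {ι : Type*} (s : Finset ι) (f g : ι → ℝ) :
    |∑ i ∈ s, f i - ∑ i ∈ s, g i| ≤ ∑ i ∈ s, |f i - g i| := by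
  rw [← sum_sub_distrib]
  exact abs_sum_le_sum_abs _ _

lemma sum_abs_div_sum_sub_div_sum_le {ι : Type*} (s : Finset ι) (f g : ι → ℝ)
    (hg : ∀ i ∈ s, 0 ≤ g i) (hf_sum : 0 < ∑ i ∈ s, f i) (hg_sum : 0 < ∑ i ∈ s, g i) :
    ∑ i ∈ s, |f i / ∑ j ∈ s, f j - g i / ∑ j ∈ s, g j| ≤
      2 * (∑ i ∈ s, |f i - g i|) / ∑ i ∈ s, f i := by
  set p := ∑ i ∈ s, f i
  set q := ∑ i ∈ s, g i
  set d := ∑ i ∈ s, |f i - g i|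
  have hqp : |q - p| ≤ d := by
    rw [abs_sub_comm]
    exact abs_sum_sub_sum_le s f g
  calc ∑ i ∈ s, |f i / p - g i / q|
      ≤ ∑ i ∈ s, (|f i - g i| / p + g i * |q - p| / (p * q)) :=
        sum_le_sum fun i hi => abs_div_sub_div_le hf_sum hg_sum (hg i hi)
    _ = d / p + q * |q - p| / (p * q) := by
      rw [sum_add_distrib, ← sum_div, ← sum_div, ← sum_mul]
    _ = (d + |q - p|) / p := by
      field_simp
    _ ≤ 2 * d / p := by
      gcongr
      linarith

theorem stmt_7_general {Ω : Type*} [Fintype Ω] [DecidableEq Ω] (P Q : Ω → ℝ) (E : Finset Ω)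
    (hQ0 : ∀ ω, 0 ≤ Q ω)
    (hPE : 0 < ∑ ω ∈ E, P ω) (hQE : 0 < ∑ ω ∈ E, Q ω) :
    (1 / 2) * ∑ ω, |(if ω ∈ E then P ω / ∑ ω' ∈ E, P ω' else 0) -
        (if ω ∈ E then Q ω / ∑ ω' ∈ E, Q ω' else 0)| ≤
      (2 * ((1 / 2) * ∑ ω, |P ω - Q ω|)) / ∑ ω ∈ E, P ω := by
  have hrestrict : ∑ ω, |(if ω ∈ E then P ω / ∑ ω' ∈ E, P ω' else 0) -
      (if ω ∈ E then Q ω / ∑ ω' ∈ E, Q ω' else 0)| =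
      ∑ ω ∈ E, |P ω / ∑ ω' ∈ E, P ω' - Q ω / ∑ ω' ∈ E, Q ω'| := by
    rw [← sum_filter_add_sum_filter_not univ (· ∈ E), filter_mem_eq_inter, univ_inter]
    simp +contextual [sum_eq_zero]
  rw [hrestrict]
  calc (1 / 2) * ∑ ω ∈ E, |P ω / ∑ ω' ∈ E, P ω' - Q ω / ∑ ω' ∈ E, Q ω'|
      ≤ (1 / 2) * (2 * (∑ ω ∈ E, |P ω - Q ω|) / ∑ ω ∈ E, P ω) := by
        gcongr
        exact sum_abs_div_sum_sub_div_sum_le E P Q (fun ω _ => hQ0 ω) hPE hQE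
    _ = (∑ ω ∈ E, |P ω - Q ω|) / ∑ ω ∈ E, P ω := by ring
    _ ≤ (∑ ω, |P ω - Q ω|) / ∑ ω ∈ E, P ω := by
        gcongr
        exact subset_univ E
    _ = (2 * ((1 / 2) * ∑ ω, |P ω - Q ω|)) / ∑ ω ∈ E, P ω := by ring

/-- Conditioning nearby distributions on an event `E` keeps them close:
`d_TV(P|E, Q|E) ≤ 2 d_TV(P,Q) / P(E)`. -/
theorem stmt_7 {Ω : Type*} [Fintype Ω] [DecidableEq Ω] (P Q : Ω → ℝ) (E : Finset Ω)
    (hP0 : ∀ ω, 0 ≤ P ω) (hP1 : ∑ ω, P ω = 1)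
    (hQ0 : ∀ ω, 0 ≤ Q ω) (hQ1 : ∑ ω, Q ω = 1)
    (hPE : 0 < ∑ ω ∈ E, P ω) (hQE : 0 < ∑ ω ∈ E, Q ω) :
    (1 / 2) * ∑ ω, |(if ω ∈ E then P ω / ∑ ω' ∈ E, P ω' else 0) -
        (if ω ∈ E then Q ω / ∑ ω' ∈ E, Q ω' else 0)| ≤
      (2 * ((1 / 2) * ∑ ω, |P ω - Q ω|)) / ∑ ω ∈ E, P ω :=
  stmt_7_general P Q E hQ0 hPE hQE
end

section
/- Let W : ℝ⁺ → ℝ⁺ be the inverse of x ↦ x·e^x (the principal branch of the Lambert W function). Then for all y ≥ e, W(y) ≤ ln y − ln ln y + ln(1 + 1/e). -/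
/-!
Taking logarithms in `z e^z = y` gives `log y = z + log z`. The tangent line of `log` at `e`
gives `log z ≤ z / e`, hence `log y ≤ (1 + 1/e) z`, and taking logarithms once more,
`log log y ≤ log z + log (1 + 1/e) = log y - z + log (1 + 1/e)`.
-/

namespace Real

lemma log_le_div_exp_one {x : ℝ} (hx : 0 < x) : log x ≤ x / exp 1 := by
  have h := log_le_sub_one_of_pos (div_pos hx (exp_pos 1))
  rw [log_div hx.ne' (exp_ne_zero 1), log_exp] at h
  linarith

lemma log_mul_exp_self {x : ℝ} (hx : x ≠ 0) : log (x * exp x) = log x + x := by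
  rw [log_mul hx (exp_ne_zero x), log_exp]

lemma log_mul_exp_self_le {x : ℝ} (hx : 0 < x) :
    log (x * exp x) ≤ x * (1 + 1 / exp 1) := by
  rw [log_mul_exp_self hx.ne']
  have := log_le_div_exp_one hx
  rw [mul_one_add, mul_one_div]
  linarith

end Real

open Real

/-- Hoorfar–Hassani bound on the Lambert W function: if `z > 0` satisfies `z·e^z = y`
and `y ≥ e`, then `z ≤ ln y − ln ln y + ln (1 + 1/e)`. -/
theorem stmt_10 (y z : ℝ) (hz : 0 < z) (hzy : z * Real.exp z = y)
    (hy : Real.exp 1 ≤ y) :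
    z ≤ Real.log y - Real.log (Real.log y) + Real.log (1 + 1 / Real.exp 1) := by
  subst hzy
  have hlog_pos : 0 < log (z * exp z) := by
    have := log_le_log (exp_pos 1) hy
    rw [log_exp] at this
    linarith
  have hloglog : log (log (z * exp z)) ≤ log z + log (1 + 1 / exp 1) := by
    rw [← log_mul hz.ne' (by positivity)]
    exact log_le_log hlog_pos (log_mul_exp_self_le hz)
  rw [log_mul_exp_self hz.ne'] at hloglog ⊢
  linarith
end

section
/- Let V be a finite F_2-vector space, let P be uniform on {x ∈ V^3 : x1+x2+x3 = 0}, let U be uniform on V^3, let Y_i = Y_i(X_i) be a 𝒴_i-valued function of the i-th component for i ∈ [3], and let W ≤ V be a subspace. If for all characters χ of W, E_{(x,y)←P_{X,Y}}[ d_TV( P_{χ(X_1) | X ∈ x+W^3, Y_1=y_1}, U_{χ(X_1) | X ∈ x+W^3} ) ] ≤ ε, then E_{x←P_X}[ d_TV( P_{Y | X ∈ x+W^3}, U_{Y | X ∈ x+W^3} ) ] ≤ ε·√(|𝒴_2|·|𝒴_3|). -/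
/-!
Fix `x` with `x₁ + x₂ + x₃ = 0`. Conditioned on the coset `x + W³`, a sample of `P` is
`(v₁, v₂, v₁ + v₂)` with `vᵢ` uniform on `xᵢ + W`, whereas under `U` the three coordinates are
independent. So `P(Y = y | ·) - U(Y = y | ·)` equals `∑ a(v₁) b(v₂) c(v₁ + v₂)` (up to
normalisation), where `b`, `c` are the indicators of `{Y₂ = y₂}`, `{Y₃ = y₃}` on their cosets and
`a` is the indicator of `{Y₁ = y₁}` on `x₁ + W` minus its mean. By Walsh–Fourier analysis on `V`
this is `∑_φ â(φ) b̂(φ) ĉ(φ)`. The triangle inequality, then Cauchy–Schwarz over `y₂` and over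
`y₃` (the source of `√(|𝒴₂| |𝒴₃|)`) and AM–GM bound the total variation distance by
`∑_φ (∑_{y₁} |â(φ)|) (‖b̂(φ)‖² + ‖ĉ(φ)‖²) / 2`. Averaged over `x₁`, `∑_{y₁} |â(φ)|` is the
average distance between the laws of `φ(X₁)` given `Y₁` under `P` and under `U` (up to
normalisation), which the hypothesis bounds by `ε` for every `φ`; Parseval controls the total
mass of `‖b̂‖² + ‖ĉ‖²`.
-/

open Finset

lemma ZMod.two_cases (b : ZMod 2) : b = 0 ∨ b = 1 := by revert b; decide

def signChar : AddChar (ZMod 2) ℝ where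
  toFun b := if b = 0 then 1 else -1
  map_zero_eq_one' := if_pos rfl
  map_add_eq_mul' a b := by
    rcases a.two_cases with rfl | rfl <;> rcases b.two_cases with rfl | rfl <;>
      simp [show (1 + 1 : ZMod 2) = 0 by decide]

lemma signChar_one : signChar 1 = -1 := by simp [signChar, show (1 : ZMod 2) ≠ 0 by decide]

lemma signChar_eq_one_iff {b : ZMod 2} : signChar b = 1 ↔ b = 0 := by
  rcases b.two_cases with rfl | rfl <;> norm_num [signChar_one]

lemma abs_signChar (b : ZMod 2) : |signChar b| = 1 := by
  rcases b.two_cases with rfl | rfl <;> norm_num [signChar_one]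

lemma ite_eq_eq_signChar (a b : ZMod 2) :
    (if a = b then (1 : ℝ) else 0) = (1 + signChar a * signChar b) / 2 := by
  rcases a.two_cases with rfl | rfl <;> rcases b.two_cases with rfl | rfl <;>
    norm_num [signChar_one]

lemma sum_signChar_apply {G : Type*} [AddGroup G] [Fintype G] [DecidableEq (G →+ ZMod 2)]
    (h : G →+ ZMod 2) :
    ∑ g, signChar (h g) = if h = 0 then (Fintype.card G : ℝ) else 0 := by
  have : signChar.compAddMonoidHom h = 0 ↔ h = 0 := by
    simp [AddChar.eq_zero_iff, signChar_eq_one_iff, AddMonoidHom.ext_iff]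
  simpa [this] using AddChar.sum_eq_ite (signChar.compAddMonoidHom h)

lemma sum_abs_mul_sum_abs_le {ι κ : Type*} [Fintype ι] [Fintype κ] (f : ι → ℝ) (g : κ → ℝ) :
    (∑ i, |f i|) * ∑ j, |g j| ≤
      √(Fintype.card ι * Fintype.card κ) * ((∑ i, f i ^ 2) + ∑ j, g j ^ 2) / 2 := by
  set p := ∑ i, |f i|
  set q := ∑ j, |g j|
  set S := ∑ i, f i ^ 2
  set T := ∑ j, g j ^ 2
  have hp : p ^ 2 ≤ Fintype.card ι * S := by
    simpa [sq_abs] using sq_sum_le_card_mul_sum_sq (s := univ) (f := fun i => |f i|)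
  have hq : q ^ 2 ≤ Fintype.card κ * T := by
    simpa [sq_abs] using sq_sum_le_card_mul_sum_sq (s := univ) (f := fun j => |g j|)
  have hS : 0 ≤ S := by positivity
  have hT : 0 ≤ T := by positivity
  have hpq : (p * q) ^ 2 ≤ (Fintype.card ι * Fintype.card κ) * ((S + T) / 2) ^ 2 :=
    calc (p * q) ^ 2 = p ^ 2 * q ^ 2 := mul_pow p q 2
      _ ≤ (Fintype.card ι * S) * (Fintype.card κ * T) :=
        mul_le_mul hp hq (by positivity) (by positivity)
      _ ≤ _ := by
        rw [show (Fintype.card ι * S) * (Fintype.card κ * T) =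
          (Fintype.card ι * Fintype.card κ) * (S * T) by ring]
        gcongr
        nlinarith [sq_nonneg (S - T)]
  calc p * q = √((p * q) ^ 2) := (Real.sqrt_sq (by positivity)).symm
    _ ≤ √((Fintype.card ι * Fintype.card κ) * ((S + T) / 2) ^ 2) := Real.sqrt_le_sqrt hpq
    _ = _ := by rw [Real.sqrt_mul (by positivity), Real.sqrt_sq (by positivity)]; ring

lemma sum_sum_mul_add_add {G : Type*} [AddGroup G] [Fintype G] (A B C : G → ℝ) :
    ∑ g₁, ∑ g₂, A g₁ * (B g₂ + C (g₁ + g₂)) = (∑ g, A g) * ((∑ g, B g) + ∑ g, C g) := by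
  have hC (g₁ : G) : ∑ g₂, C (g₁ + g₂) = ∑ g, C g := Equiv.sum_comp (Equiv.addLeft g₁) C
  simp_rw [mul_add, sum_add_distrib, ← mul_sum, hC, ← sum_mul]

lemma card_filter_univ_prod {α : Type*} [Fintype α] (q : α × α × α → Prop) [DecidablePred q] :
    (#(univ.filter q) : ℝ) = ∑ a₁, ∑ a₂, ∑ a₃, if q (a₁, a₂, a₃) then 1 else 0 := by
  rw [card_filter, Nat.cast_sum]
  simp_rw [Fintype.sum_prod_type]
  push_cast; rfl

section Walsh

variable {V : Type*} [AddCommGroup V] [Module (ZMod 2) V] [Fintype V]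

noncomputable instance : Fintype (Module.Dual (ZMod 2) V) :=
  have : Finite (Module.Dual (ZMod 2) V) := Module.finite_of_finite (ZMod 2)
  Fintype.ofFinite _

lemma sum_dual_signChar_apply [DecidableEq V] (v : V) :
    ∑ φ : Module.Dual (ZMod 2) V, signChar (φ v) =
      if v = 0 then (Fintype.card (Module.Dual (ZMod 2) V) : ℝ) else 0 := by
  classical
  have := sum_signChar_apply (Module.Dual.eval (ZMod 2) V v).toAddMonoidHom
  simpa [AddMonoidHom.ext_iff, Module.forall_dual_apply_eq_zero_iff] using this

noncomputable def walsh (f : V → ℝ) (φ : Module.Dual (ZMod 2) V) : ℝ :=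
  ∑ v, f v * signChar (φ v)

lemma walsh_comp_add_right (f : V → ℝ) (w : V) (φ : Module.Dual (ZMod 2) V) :
    walsh (fun v => f (v + w)) φ = signChar (φ w) * walsh f φ := by
  rw [walsh, walsh, mul_sum, ← Equiv.sum_comp (Equiv.addRight w)]
  refine sum_congr rfl fun v _ => ?_
  simp only [Equiv.coe_addRight, add_assoc, ZModModule.add_self, add_zero, map_add,
    AddChar.map_add_eq_mul]
  ring

lemma sum_walsh (f : V → ℝ) :
    ∑ φ, walsh f φ = Fintype.card (Module.Dual (ZMod 2) V) * f 0 := by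
  classical
  simp_rw [walsh]
  rw [sum_comm]
  simp [← mul_sum, sum_dual_signChar_apply, mul_comm]

lemma sum_walsh_sq (f : V → ℝ) :
    ∑ φ, walsh f φ ^ 2 = Fintype.card (Module.Dual (ZMod 2) V) * ∑ v, f v ^ 2 := by
  have (φ : Module.Dual (ZMod 2) V) :
      walsh f φ ^ 2 = ∑ v, f v * walsh (fun u => f (u + v)) φ := by
    simp_rw [walsh_comp_add_right, ← mul_assoc, ← sum_mul]
    exact sq _
  simp_rw [this]
  rw [sum_comm]
  simp_rw [← mul_sum, sum_walsh, zero_add, mul_sum]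
  exact sum_congr rfl fun v _ => by ring

lemma sum_walsh_mul_walsh_mul_walsh (a b c : V → ℝ) :
    ∑ φ, walsh a φ * walsh b φ * walsh c φ =
      Fintype.card (Module.Dual (ZMod 2) V) * ∑ v₁, ∑ v₂, a v₁ * b v₂ * c (v₁ + v₂) := by
  have (φ : Module.Dual (ZMod 2) V) : walsh a φ * walsh b φ * walsh c φ =
      ∑ v₁, ∑ v₂, a v₁ * b v₂ * walsh (fun u => c (u + (v₁ + v₂))) φ := by
    change (∑ v₁, a v₁ * signChar (φ v₁)) * (∑ v₂, b v₂ * signChar (φ v₂)) * walsh c φ = _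
    simp_rw [walsh_comp_add_right, map_add, AddChar.map_add_eq_mul, sum_mul_sum, sum_mul]
    exact sum_congr rfl fun _ _ => sum_congr rfl fun _ _ => by ring
  simp_rw [this, mul_sum]
  rw [sum_comm]
  refine sum_congr rfl fun v₁ _ => ?_
  rw [sum_comm]
  refine sum_congr rfl fun v₂ _ => ?_
  rw [← mul_sum, sum_walsh, zero_add]
  ring

lemma sum_mul_ite_eq (f : V → ℝ) (φ : Module.Dual (ZMod 2) V) (b : ZMod 2) :
    ∑ v, f v * (if φ v = b then 1 else 0) = (∑ v, f v + signChar b * walsh f φ) / 2 := by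
  simp_rw [ite_eq_eq_signChar, walsh, mul_sum, ← sum_add_distrib, sum_div]
  exact sum_congr rfl fun v _ => by ring

lemma sum_abs_sum_mul_mul_le {Y₁ Y₂ Y₃ : Type*} [Fintype Y₁] [Fintype Y₂] [Fintype Y₃]
    (a : Y₁ → V → ℝ) (b : Y₂ → V → ℝ) (c : Y₃ → V → ℝ) :
    Fintype.card (Module.Dual (ZMod 2) V) *
        ∑ y : Y₁ × Y₂ × Y₃, |∑ v₁, ∑ v₂, a y.1 v₁ * b y.2.1 v₂ * c y.2.2 (v₁ + v₂)| ≤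
      √(Fintype.card Y₂ * Fintype.card Y₃) * ∑ φ, (∑ y₁, |walsh (a y₁) φ|) *
        ((∑ y₂, walsh (b y₂) φ ^ 2) + ∑ y₃, walsh (c y₃) φ ^ 2) / 2 := by
  calc _ = ∑ y : Y₁ × Y₂ × Y₃,
        |∑ φ, walsh (a y.1) φ * walsh (b y.2.1) φ * walsh (c y.2.2) φ| := by
        simp_rw [sum_walsh_mul_walsh_mul_walsh, abs_mul, Nat.abs_cast, mul_sum]
    _ ≤ ∑ y : Y₁ × Y₂ × Y₃, ∑ φ,
          |walsh (a y.1) φ| * (|walsh (b y.2.1) φ| * |walsh (c y.2.2) φ|) := by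
        gcongr with y
        refine (abs_sum_le_sum_abs _ _).trans_eq ?_
        simp_rw [abs_mul, mul_assoc]
    _ = ∑ φ, (∑ y₁, |walsh (a y₁) φ|) *
          ((∑ y₂, |walsh (b y₂) φ|) * ∑ y₃, |walsh (c y₃) φ|) := by
        rw [sum_comm]
        simp_rw [Fintype.sum_prod_type, sum_mul_sum, mul_sum]
    _ ≤ ∑ φ, (∑ y₁, |walsh (a y₁) φ|) * (√(Fintype.card Y₂ * Fintype.card Y₃) *
          ((∑ y₂, walsh (b y₂) φ ^ 2) + ∑ y₃, walsh (c y₃) φ ^ 2) / 2) := by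
        gcongr with φ
        exact sum_abs_mul_sum_abs_le _ _
    _ = _ := by
        rw [mul_sum]
        exact sum_congr rfl fun φ _ => by ring

end Walsh

section Coset

open scoped Classical

variable {V : Type*} [AddCommGroup V] [Module (ZMod 2) V] (W : Submodule (ZMod 2) V)
  {𝒴 : Type*} (Y : V → 𝒴)

noncomputable def cosetIndicator (x v : V) : ℝ := if v - x ∈ W then 1 else 0

noncomputable def fiberIndicator (x : V) (y : 𝒴) (v : V) : ℝ :=
  if v - x ∈ W ∧ Y v = y then 1 else 0

noncomputable def fiberCount [Fintype V] (x : V) (y : 𝒴) : ℝ := ∑ v, fiberIndicator W Y x y v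

/-- The Walsh coefficients of this function measure how far the law of `φ` on the fiber
`{Y = y}` of the coset `x + W` is from its law on the whole coset. -/
noncomputable def centeredFiber [Fintype V] (x : V) (y : 𝒴) (v : V) : ℝ :=
  fiberIndicator W Y x y v - fiberCount W Y x y / Fintype.card W * cosetIndicator W x v

variable {W}

lemma sub_mem_iff_of_sub_mem {x x' : V} (h : x' - x ∈ W) (v : V) :
    v - x' ∈ W ↔ v - x ∈ W := by
  rw [show v - x' = (v - x) - (x' - x) by abel]
  exact W.sub_mem_iff_left h

lemma cosetIndicator_congr {x x' : V} (h : x' - x ∈ W) :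
    cosetIndicator W x' = cosetIndicator W x := by
  ext v; simp [cosetIndicator, sub_mem_iff_of_sub_mem h]

lemma fiberIndicator_congr {x x' : V} (h : x' - x ∈ W) :
    fiberIndicator W Y x' = fiberIndicator W Y x := by
  ext y v; simp [fiberIndicator, sub_mem_iff_of_sub_mem h]

lemma fiberCount_congr [Fintype V] {x x' : V} (h : x' - x ∈ W) :
    fiberCount W Y x' = fiberCount W Y x := by
  ext y; simp [fiberCount, fiberIndicator_congr Y h]

lemma centeredFiber_congr [Fintype V] {x x' : V} (h : x' - x ∈ W) :
    centeredFiber W Y x' = centeredFiber W Y x := by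
  ext y v; simp [centeredFiber, fiberCount, fiberIndicator_congr Y h, cosetIndicator_congr h]

variable (W)

lemma cosetIndicator_comm (x v : V) : cosetIndicator W x v = cosetIndicator W v x := by
  simp [cosetIndicator, ZModModule.sub_eq_add, add_comm]

lemma cosetIndicator_mul_ite (x v : V) (y : 𝒴) :
    cosetIndicator W x v * (if Y v = y then 1 else 0) = fiberIndicator W Y x y v := by
  simp only [cosetIndicator, fiberIndicator, ite_zero_mul_ite_zero, mul_one]

lemma cosetIndicator_mul_fiberIndicator (x v : V) (y : 𝒴) :
    cosetIndicator W x v * fiberIndicator W Y x y v = fiberIndicator W Y x y v := by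
  by_cases hv : v - x ∈ W <;> simp [cosetIndicator, fiberIndicator, hv]

lemma sum_fiberIndicator [Fintype 𝒴] (x v : V) :
    ∑ y, fiberIndicator W Y x y v = cosetIndicator W x v := by
  simp [fiberIndicator, cosetIndicator, ite_and]

variable [Fintype V]

lemma sum_cosetIndicator (x : V) : ∑ v, cosetIndicator W x v = Fintype.card W := by
  unfold cosetIndicator
  rw [Fintype.sum_equiv (Equiv.subRight x) _ (fun v => if v ∈ W then (1 : ℝ) else 0) (by simp),
    sum_boole, Fintype.card_subtype]

lemma one_le_fiberCount_self (x : V) : 1 ≤ fiberCount W Y x (Y x) := by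
  have : fiberIndicator W Y x (Y x) x = 1 := by simp [fiberIndicator]
  rw [← this]
  exact single_le_sum (f := fiberIndicator W Y x (Y x))
    (fun v _ => by unfold fiberIndicator; positivity) (mem_univ x)

lemma sum_cosetIndicator_mul_fiberIndicator_add {x x' z : V} (h : x + z - x' ∈ W) (y : 𝒴) :
    ∑ v, cosetIndicator W x v * fiberIndicator W Y x' y (v + z) = fiberCount W Y x' y := by
  have hc (u : V) : cosetIndicator W x (u + z) = cosetIndicator W x' u := by
    rw [cosetIndicator_congr (x := x + z) (x' := x') (by rw [← neg_sub]; exact W.neg_mem h),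
      cosetIndicator, cosetIndicator,
      show u + z - x = u - (x + z) by simp only [ZModModule.sub_eq_add]; abel]
  rw [fiberCount, Fintype.sum_equiv (Equiv.addRight z) _
    (fun u => cosetIndicator W x' u * fiberIndicator W Y x' y u)]
  · simp_rw [cosetIndicator_mul_fiberIndicator]
  · intro v
    simp only [Equiv.coe_addRight, ← hc, add_assoc, ZModModule.add_self, add_zero]

lemma card_mul_sum_eq_sum_fiberCount_mul [Fintype 𝒴] (h : V → 𝒴 → ℝ)
    (hh : ∀ x x', x' - x ∈ W → h x' = h x) :
    Fintype.card W * ∑ x, h x (Y x) = ∑ x, ∑ y, fiberCount W Y x y * h x y := by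
  have hfib (x v : V) :
      ∑ y, fiberIndicator W Y x y v * h x y = cosetIndicator W x v * h v (Y v) := by
    simp_rw [← cosetIndicator_mul_ite, mul_assoc, ← mul_sum, boole_mul, sum_ite_eq, mem_univ,
      if_true]
    by_cases hv : v - x ∈ W
    · rw [hh x v hv]
    · simp [cosetIndicator, hv]
  calc (Fintype.card W : ℝ) * ∑ x, h x (Y x)
      = ∑ v, (∑ x, cosetIndicator W v x) * h v (Y v) := by
        simp_rw [sum_cosetIndicator, mul_sum]
    _ = ∑ x, ∑ v, cosetIndicator W x v * h v (Y v) := by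
        simp_rw [sum_mul]
        rw [sum_comm]
        exact sum_congr rfl fun x _ => sum_congr rfl fun v _ => by rw [cosetIndicator_comm]
    _ = ∑ x, ∑ y, fiberCount W Y x y * h x y := by
        simp_rw [fiberCount, sum_mul, ← hfib]
        exact sum_congr rfl fun x _ => sum_comm

lemma walsh_centeredFiber (x : V) (y : 𝒴) (φ : Module.Dual (ZMod 2) V) :
    walsh (centeredFiber W Y x y) φ = walsh (fiberIndicator W Y x y) φ -
      fiberCount W Y x y / Fintype.card W * walsh (cosetIndicator W x) φ := by
  simp only [walsh, centeredFiber, sub_mul, sum_sub_distrib, mul_sum, mul_assoc]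

lemma walsh_centeredFiber_eq_zero {x : V} {y : 𝒴} (h : fiberCount W Y x y = 0)
    (φ : Module.Dual (ZMod 2) V) : walsh (centeredFiber W Y x y) φ = 0 := by
  have hf : fiberIndicator W Y x y = 0 := funext fun v =>
    (sum_eq_zero_iff_of_nonneg fun v _ => by unfold fiberIndicator; positivity).1 h v (mem_univ v)
  rw [walsh_centeredFiber, h, hf]
  simp [walsh]

lemma sum_sum_walsh_fiberIndicator_sq [Fintype 𝒴] :
    ∑ φ, ∑ x, ∑ y, walsh (fiberIndicator W Y x y) φ ^ 2 =
      Fintype.card (Module.Dual (ZMod 2) V) * (Fintype.card V * Fintype.card W) := by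
  have hsq (x : V) (y : 𝒴) (v : V) :
      fiberIndicator W Y x y v ^ 2 = fiberIndicator W Y x y v := by
    unfold fiberIndicator; split_ifs <;> norm_num
  rw [sum_comm]
  simp_rw [sum_comm (s := univ (α := Module.Dual (ZMod 2) V)), sum_walsh_sq, hsq, ← mul_sum]
  congr 1
  calc _ = ∑ x : V, ∑ v, cosetIndicator W x v := sum_congr rfl fun x _ => by
        rw [sum_comm]
        simp_rw [sum_fiberIndicator]
    _ = _ := by simp [sum_cosetIndicator]

end Coset

section ZeroSumTriples

open scoped Classical

variable {V : Type*} [AddCommGroup V] [Module (ZMod 2) V]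

def InCoset (W : Submodule (ZMod 2) V) (x x' : V × V × V) : Prop :=
  x'.1 - x.1 ∈ W ∧ x'.2.1 - x.2.1 ∈ W ∧ x'.2.2 - x.2.2 ∈ W

variable [Fintype V]

noncomputable def zeroSumTriples : Finset (V × V × V) :=
  univ.filter fun x => x.1 + x.2.1 + x.2.2 = 0

lemma sum_zeroSumTriples (g : V × V × V → ℝ) :
    ∑ x ∈ zeroSumTriples, g x = ∑ v₁, ∑ v₂, g (v₁, v₂, v₁ + v₂) := by
  have (v₁ v₂ v₃ : V) : v₁ + v₂ + v₃ = 0 ↔ v₃ = v₁ + v₂ := by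
    rw [add_eq_zero_iff_eq_neg, ZModModule.neg_eq_self, eq_comm]
  simp_rw [zeroSumTriples, sum_filter, Fintype.sum_prod_type, this, sum_ite_eq', mem_univ,
    if_true]

lemma card_zeroSumTriples :
    (#(zeroSumTriples : Finset (V × V × V)) : ℝ) = Fintype.card V ^ 2 := by
  rw [card_eq_sum_ones, Nat.cast_sum, sum_zeroSumTriples]
  simp [sq]

lemma card_filter_zeroSumTriples (q : V × V × V → Prop) [DecidablePred q] :
    (#(zeroSumTriples.filter q) : ℝ) = ∑ v₁, ∑ v₂, if q (v₁, v₂, v₁ + v₂) then 1 else 0 := by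
  rw [card_filter, Nat.cast_sum, sum_zeroSumTriples]
  push_cast; rfl

lemma inCoset_iff_of_mem_zeroSumTriples (W : Submodule (ZMod 2) V) {x : V × V × V}
    (hx : x ∈ zeroSumTriples) (v₁ v₂ : V) :
    InCoset W x (v₁, v₂, v₁ + v₂) ↔ v₁ - x.1 ∈ W ∧ v₂ - x.2.1 ∈ W := by
  have hx3 : (v₁ + v₂) - x.2.2 = (v₁ - x.1) + (v₂ - x.2.1) := by
    have : x.1 + x.2.1 + x.2.2 = 0 := (mem_filter.1 hx).2
    rw [add_eq_zero_iff_eq_neg, ZModModule.neg_eq_self] at this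
    simp only [ZModModule.sub_eq_add, ← this]; abel
  simp only [InCoset, hx3]
  exact ⟨fun h => ⟨h.1, h.2.1⟩, fun h => ⟨h.1, h.2, W.add_mem h.1 h.2⟩⟩

end ZeroSumTriples

section ConditionalLaws

open scoped Classical

variable {V : Type*} [AddCommGroup V] [Module (ZMod 2) V] [Fintype V] (W : Submodule (ZMod 2) V)
  {𝒴₁ 𝒴₂ 𝒴₃ : Type*} (Y₁ : V → 𝒴₁) (Y₂ : V → 𝒴₂) (Y₃ : V → 𝒴₃)

lemma card_filter_inCoset_fiber_zeroSumTriples (x : V × V × V) (y : 𝒴₁ × 𝒴₂ × 𝒴₃) :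
    (#(zeroSumTriples.filter fun x' => InCoset W x x' ∧
        Y₁ x'.1 = y.1 ∧ Y₂ x'.2.1 = y.2.1 ∧ Y₃ x'.2.2 = y.2.2) : ℝ) =
      ∑ v₁, ∑ v₂, fiberIndicator W Y₁ x.1 y.1 v₁ * fiberIndicator W Y₂ x.2.1 y.2.1 v₂ *
        fiberIndicator W Y₃ x.2.2 y.2.2 (v₁ + v₂) := by
  rw [card_filter_zeroSumTriples]
  refine sum_congr rfl fun v₁ _ => sum_congr rfl fun v₂ _ => ?_
  simp only [fiberIndicator, ite_zero_mul_ite_zero, mul_one]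
  exact if_congr (by simp only [InCoset]; tauto) rfl rfl

lemma card_filter_inCoset_fiber_univ (x : V × V × V) (y : 𝒴₁ × 𝒴₂ × 𝒴₃) :
    (#(univ.filter fun x' => InCoset W x x' ∧
        Y₁ x'.1 = y.1 ∧ Y₂ x'.2.1 = y.2.1 ∧ Y₃ x'.2.2 = y.2.2) : ℝ) =
      fiberCount W Y₁ x.1 y.1 * fiberCount W Y₂ x.2.1 y.2.1 * fiberCount W Y₃ x.2.2 y.2.2 := by
  simp only [card_filter_univ_prod, fiberCount]
  rw [sum_mul_sum, sum_mul]
  simp_rw [sum_mul_sum]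
  refine sum_congr rfl fun v₁ _ => sum_congr rfl fun v₂ _ => sum_congr rfl fun v₃ _ => ?_
  simp only [fiberIndicator, ite_zero_mul_ite_zero, mul_one]
  exact if_congr (by simp only [InCoset]; tauto) rfl rfl

variable {W} in
lemma card_filter_inCoset_fst_zeroSumTriples {x : V × V × V} (hx : x ∈ zeroSumTriples)
    (p : V → Prop) [DecidablePred p] :
    (#(zeroSumTriples.filter fun x' => InCoset W x x' ∧ p x'.1) : ℝ) =
      (∑ v, cosetIndicator W x.1 v * if p v then 1 else 0) * Fintype.card W := by
  rw [card_filter_zeroSumTriples, ← sum_cosetIndicator W x.2.1, sum_mul_sum]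
  refine sum_congr rfl fun v₁ _ => sum_congr rfl fun v₂ _ => ?_
  simp only [cosetIndicator, ite_zero_mul_ite_zero, mul_one]
  exact if_congr (by rw [inCoset_iff_of_mem_zeroSumTriples W hx]; tauto) rfl rfl

lemma card_filter_inCoset_fst_univ (x : V × V × V) (p : V → Prop) [DecidablePred p] :
    (#(univ.filter fun x' => InCoset W x x' ∧ p x'.1) : ℝ) =
      (∑ v, cosetIndicator W x.1 v * if p v then 1 else 0) * Fintype.card W ^ 2 := by
  rw [sq]
  nth_rw 1 [← sum_cosetIndicator W x.2.1]
  rw [← sum_cosetIndicator W x.2.2, ← mul_assoc]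
  rw [card_filter_univ_prod, sum_mul_sum, sum_mul]
  simp_rw [sum_mul_sum]
  refine sum_congr rfl fun v₁ _ => sum_congr rfl fun v₂ _ => sum_congr rfl fun v₃ _ => ?_
  simp only [cosetIndicator, ite_zero_mul_ite_zero, mul_one]
  exact if_congr (by simp only [InCoset]; tauto) rfl rfl

variable {W} in
lemma card_filter_inCoset_zeroSumTriples {x : V × V × V} (hx : x ∈ zeroSumTriples) :
    (#(zeroSumTriples.filter fun x' => InCoset W x x') : ℝ) = Fintype.card W ^ 2 := by
  simpa [sum_cosetIndicator, sq] using card_filter_inCoset_fst_zeroSumTriples hx fun _ => True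

lemma card_filter_inCoset_univ (x : V × V × V) :
    (#(univ.filter fun x' => InCoset W x x') : ℝ) = Fintype.card W ^ 3 := by
  have := card_filter_inCoset_fst_univ W x fun _ => True
  simp only [and_true, if_true, mul_one, sum_cosetIndicator] at this
  rw [this]
  ring

variable {W} in
lemma sum_centeredFiber_mul_mul {x : V × V × V} (hx : x ∈ zeroSumTriples) (y : 𝒴₁ × 𝒴₂ × 𝒴₃) :
    ∑ v₁, ∑ v₂, centeredFiber W Y₁ x.1 y.1 v₁ * fiberIndicator W Y₂ x.2.1 y.2.1 v₂ *
        fiberIndicator W Y₃ x.2.2 y.2.2 (v₁ + v₂) =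
      ∑ v₁, ∑ v₂, fiberIndicator W Y₁ x.1 y.1 v₁ * fiberIndicator W Y₂ x.2.1 y.2.1 v₂ *
        fiberIndicator W Y₃ x.2.2 y.2.2 (v₁ + v₂) -
      fiberCount W Y₁ x.1 y.1 * fiberCount W Y₂ x.2.1 y.2.1 * fiberCount W Y₃ x.2.2 y.2.2 /
        Fintype.card W := by
  have hx0 : x.1 + x.2.1 + x.2.2 = 0 := (mem_filter.1 hx).2
  have key (v₂ : V) : fiberIndicator W Y₂ x.2.1 y.2.1 v₂ *
      ∑ v₁, cosetIndicator W x.1 v₁ * fiberIndicator W Y₃ x.2.2 y.2.2 (v₁ + v₂) =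
        fiberIndicator W Y₂ x.2.1 y.2.1 v₂ * fiberCount W Y₃ x.2.2 y.2.2 := by
    by_cases hv : v₂ - x.2.1 ∈ W
    · rw [sum_cosetIndicator_mul_fiberIndicator_add]
      rwa [show x.1 + v₂ - x.2.2 = (v₂ - x.2.1) + (x.1 + x.2.1 + x.2.2) - (x.2.2 + x.2.2) by abel,
        hx0, ZModModule.add_self, add_zero, sub_zero]
    · simp [fiberIndicator, hv]
  simp only [centeredFiber, sub_mul, sum_sub_distrib]
  congr 1
  calc _ = ∑ v₂, fiberCount W Y₁ x.1 y.1 / Fintype.card W * (fiberIndicator W Y₂ x.2.1 y.2.1 v₂ *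
        ∑ v₁, cosetIndicator W x.1 v₁ * fiberIndicator W Y₃ x.2.2 y.2.2 (v₁ + v₂)) := by
        rw [sum_comm]
        simp_rw [mul_sum]
        exact sum_congr rfl fun _ _ => sum_congr rfl fun _ _ => by ring
    _ = _ := by
        simp_rw [key, ← mul_sum, ← sum_mul]
        simp only [fiberCount]
        ring

variable {W} in
lemma condProb_sub_condProb_eq {x : V × V × V} (hx : x ∈ zeroSumTriples) (y : 𝒴₁ × 𝒴₂ × 𝒴₃) :
    (#(zeroSumTriples.filter fun x' => InCoset W x x' ∧
        Y₁ x'.1 = y.1 ∧ Y₂ x'.2.1 = y.2.1 ∧ Y₃ x'.2.2 = y.2.2) : ℝ) /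
        #(zeroSumTriples.filter fun x' => InCoset W x x') -
      (#(univ.filter fun x' => InCoset W x x' ∧
        Y₁ x'.1 = y.1 ∧ Y₂ x'.2.1 = y.2.1 ∧ Y₃ x'.2.2 = y.2.2) : ℝ) /
        #(univ.filter fun x' => InCoset W x x') =
      (∑ v₁, ∑ v₂, centeredFiber W Y₁ x.1 y.1 v₁ * fiberIndicator W Y₂ x.2.1 y.2.1 v₂ *
        fiberIndicator W Y₃ x.2.2 y.2.2 (v₁ + v₂)) / Fintype.card W ^ 2 := by
  have hn : (Fintype.card W : ℝ) ≠ 0 := Nat.cast_ne_zero.2 Fintype.card_ne_zero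
  rw [card_filter_inCoset_fiber_zeroSumTriples, card_filter_inCoset_fiber_univ,
    card_filter_inCoset_zeroSumTriples hx, card_filter_inCoset_univ,
    sum_centeredFiber_mul_mul Y₁ Y₂ Y₃ hx]
  field_simp

variable {W} in
lemma tvDist_char_eq {x : V × V × V} (hx : x ∈ zeroSumTriples) (φ : Module.Dual (ZMod 2) V) :
    (1 / 2 : ℝ) * ∑ b : ZMod 2,
      |(#(zeroSumTriples.filter fun x' => InCoset W x x' ∧ Y₁ x'.1 = Y₁ x.1 ∧ φ x'.1 = b) : ℝ) /
          #(zeroSumTriples.filter fun x' => InCoset W x x' ∧ Y₁ x'.1 = Y₁ x.1) -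
        (#(univ.filter fun x' => InCoset W x x' ∧ φ x'.1 = b) : ℝ) /
          #(univ.filter fun x' => InCoset W x x')| =
      |walsh (centeredFiber W Y₁ x.1 (Y₁ x.1)) φ| / (2 * fiberCount W Y₁ x.1 (Y₁ x.1)) := by
  set m := fiberCount W Y₁ x.1 (Y₁ x.1)
  have hm : 0 < m := one_pos.trans_le (one_le_fiberCount_self W Y₁ x.1)
  have hn : (Fintype.card W : ℝ) ≠ 0 := Nat.cast_ne_zero.2 Fintype.card_ne_zero
  have hP : (#(zeroSumTriples.filter fun x' => InCoset W x x' ∧ Y₁ x'.1 = Y₁ x.1) : ℝ) =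
      m * Fintype.card W := by
    rw [card_filter_inCoset_fst_zeroSumTriples hx (fun v => Y₁ v = Y₁ x.1)]
    simp_rw [cosetIndicator_mul_ite]
    rfl
  have hPb (b : ZMod 2) :
      (#(zeroSumTriples.filter fun x' => InCoset W x x' ∧ Y₁ x'.1 = Y₁ x.1 ∧ φ x'.1 = b) : ℝ) =
        (m + signChar b * walsh (fiberIndicator W Y₁ x.1 (Y₁ x.1)) φ) / 2 * Fintype.card W := by
    have (v : V) : cosetIndicator W x.1 v * (if Y₁ v = Y₁ x.1 ∧ φ v = b then 1 else 0) =
        fiberIndicator W Y₁ x.1 (Y₁ x.1) v * if φ v = b then 1 else 0 := by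
      simp only [cosetIndicator, fiberIndicator, ite_zero_mul_ite_zero, mul_one, and_assoc]
    rw [card_filter_inCoset_fst_zeroSumTriples hx (fun v => Y₁ v = Y₁ x.1 ∧ φ v = b)]
    simp_rw [this, sum_mul_ite_eq]
    rfl
  have hUb (b : ZMod 2) : (#(univ.filter fun x' => InCoset W x x' ∧ φ x'.1 = b) : ℝ) =
      (Fintype.card W + signChar b * walsh (cosetIndicator W x.1) φ) / 2 * Fintype.card W ^ 2 := by
    rw [card_filter_inCoset_fst_univ W x (fun v => φ v = b), sum_mul_ite_eq, sum_cosetIndicator]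
  have hb (b : ZMod 2) :
      (m + signChar b * walsh (fiberIndicator W Y₁ x.1 (Y₁ x.1)) φ) / 2 * Fintype.card W /
          (m * Fintype.card W) -
        (Fintype.card W + signChar b * walsh (cosetIndicator W x.1) φ) / 2 *
          Fintype.card W ^ 2 / Fintype.card W ^ 3 =
      signChar b * (walsh (centeredFiber W Y₁ x.1 (Y₁ x.1)) φ / (2 * m)) := by
    rw [walsh_centeredFiber]
    field_simp
    ring
  simp_rw [hP, hPb, hUb, card_filter_inCoset_univ, hb, abs_mul, abs_signChar, one_mul, sum_const,
    card_univ, ZMod.card, abs_div, abs_of_pos (by positivity : 0 < 2 * m)]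
  ring

lemma sum_sum_abs_walsh_centeredFiber_le [Fintype 𝒴₁] (ε : ℝ) (φ : Module.Dual (ZMod 2) V)
    (h : ∑ x ∈ zeroSumTriples, 1 / (#(zeroSumTriples : Finset (V × V × V)) : ℝ) *
      (|walsh (centeredFiber W Y₁ x.1 (Y₁ x.1)) φ| / (2 * fiberCount W Y₁ x.1 (Y₁ x.1))) ≤ ε) :
    ∑ x, ∑ y : 𝒴₁, |walsh (centeredFiber W Y₁ x y) φ| ≤
      2 * Fintype.card W * Fintype.card V * ε := by
  set g : V → 𝒴₁ → ℝ :=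
    fun x y => |walsh (centeredFiber W Y₁ x y) φ| / (2 * fiberCount W Y₁ x y)
  -- `g x` depends only on the coset of `x`, so averaging over `x` weighs each `y` by its fiber.
  have hg (x x' : V) (hx : x' - x ∈ W) : g x' = g x := by
    simp only [g, centeredFiber_congr Y₁ hx, fiberCount_congr Y₁ hx]
  have hmass (x : V) (y : 𝒴₁) :
      |walsh (centeredFiber W Y₁ x y) φ| = 2 * (fiberCount W Y₁ x y * g x y) := by
    by_cases hm : fiberCount W Y₁ x y = 0
    · simp [hm, walsh_centeredFiber_eq_zero]
    · simp only [g]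
      field_simp
  have hN : (0 : ℝ) < Fintype.card V := Nat.cast_pos.2 Fintype.card_pos
  have hsum : ∑ x, g x (Y₁ x) ≤ Fintype.card V * ε := by
    rw [card_zeroSumTriples, sum_zeroSumTriples] at h
    simp only [sum_const, card_univ, nsmul_eq_mul, ← mul_sum] at h
    calc ∑ x, g x (Y₁ x) = Fintype.card V * (Fintype.card V *
          (1 / Fintype.card V ^ 2 * ∑ x, g x (Y₁ x))) := by field_simp
      _ ≤ Fintype.card V * ε := by gcongr
  calc ∑ x, ∑ y : 𝒴₁, |walsh (centeredFiber W Y₁ x y) φ|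
      = 2 * (Fintype.card W * ∑ x, g x (Y₁ x)) := by
        simp_rw [hmass, ← mul_sum, card_mul_sum_eq_sum_fiberCount_mul W Y₁ g hg]
    _ ≤ 2 * (Fintype.card W * (Fintype.card V * ε)) := by gcongr
    _ = _ := by ring

lemma tvDist_le_sum_walsh [Fintype 𝒴₁] [Fintype 𝒴₂] [Fintype 𝒴₃] (x : V × V × V) :
    (1 / 2) * ∑ y : 𝒴₁ × 𝒴₂ × 𝒴₃,
      |(∑ v₁, ∑ v₂, centeredFiber W Y₁ x.1 y.1 v₁ * fiberIndicator W Y₂ x.2.1 y.2.1 v₂ *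
        fiberIndicator W Y₃ x.2.2 y.2.2 (v₁ + v₂)) / Fintype.card W ^ 2| ≤
      √(Fintype.card 𝒴₂ * Fintype.card 𝒴₃) /
          (4 * Fintype.card W ^ 2 * Fintype.card (Module.Dual (ZMod 2) V)) *
        ∑ φ, (∑ y₁, |walsh (centeredFiber W Y₁ x.1 y₁) φ|) *
          ((∑ y₂, walsh (fiberIndicator W Y₂ x.2.1 y₂) φ ^ 2) +
            ∑ y₃, walsh (fiberIndicator W Y₃ x.2.2 y₃) φ ^ 2) := by
  have hD : (0 : ℝ) < Fintype.card (Module.Dual (ZMod 2) V) := Nat.cast_pos.2 Fintype.card_pos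
  have hn : (0 : ℝ) < Fintype.card W := Nat.cast_pos.2 Fintype.card_pos
  have key := sum_abs_sum_mul_mul_le (centeredFiber W Y₁ x.1) (fiberIndicator W Y₂ x.2.1)
    (fiberIndicator W Y₃ x.2.2)
  rw [← sum_div, ← le_div_iff₀' hD] at key
  simp_rw [abs_div, abs_of_pos (pow_pos hn 2), ← sum_div]
  calc _ = (∑ y : 𝒴₁ × 𝒴₂ × 𝒴₃, |∑ v₁, ∑ v₂, centeredFiber W Y₁ x.1 y.1 v₁ *
          fiberIndicator W Y₂ x.2.1 y.2.1 v₂ * fiberIndicator W Y₃ x.2.2 y.2.2 (v₁ + v₂)|) /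
          (2 * Fintype.card W ^ 2) := by
        field_simp
    _ ≤ _ := by
        grw [key]
        field_simp
        norm_num

lemma sum_tvDist_le_of_walsh_bias [Fintype 𝒴₁] [Fintype 𝒴₂] [Fintype 𝒴₃] (ε : ℝ)
    (hbias : ∀ φ : Module.Dual (ZMod 2) V, ∑ x, ∑ y : 𝒴₁, |walsh (centeredFiber W Y₁ x y) φ| ≤
      2 * Fintype.card W * Fintype.card V * ε) :
    ∑ x ∈ zeroSumTriples, 1 / (#(zeroSumTriples : Finset (V × V × V)) : ℝ) *
      ((1 / 2) * ∑ y : 𝒴₁ × 𝒴₂ × 𝒴₃,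
        |(∑ v₁, ∑ v₂, centeredFiber W Y₁ x.1 y.1 v₁ * fiberIndicator W Y₂ x.2.1 y.2.1 v₂ *
          fiberIndicator W Y₃ x.2.2 y.2.2 (v₁ + v₂)) / Fintype.card W ^ 2|) ≤
      ε * √(Fintype.card 𝒴₂ * Fintype.card 𝒴₃) := by
  set D : ℝ := Nat.cast (Fintype.card (Module.Dual (ZMod 2) V))
  set N : ℝ := Nat.cast (Fintype.card V)
  set n : ℝ := Nat.cast (Fintype.card W)
  set K := √(Fintype.card 𝒴₂ * Fintype.card 𝒴₃)
  set A := fun φ x => ∑ y₁ : 𝒴₁, |walsh (centeredFiber W Y₁ x y₁) φ|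
  set B := fun φ x => ∑ y₂ : 𝒴₂, walsh (fiberIndicator W Y₂ x y₂) φ ^ 2
  set C := fun φ x => ∑ y₃ : 𝒴₃, walsh (fiberIndicator W Y₃ x y₃) φ ^ 2
  have hD : 0 < D := Nat.cast_pos.2 Fintype.card_pos
  have hN : 0 < N := Nat.cast_pos.2 Fintype.card_pos
  have hn : 0 < n := Nat.cast_pos.2 Fintype.card_pos
  calc _ ≤ ∑ x ∈ zeroSumTriples, 1 / N ^ 2 *
        (K / (4 * n ^ 2 * D) * ∑ φ, A φ x.1 * (B φ x.2.1 + C φ x.2.2)) := by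
        rw [card_zeroSumTriples]
        exact sum_le_sum fun x _ =>
          mul_le_mul_of_nonneg_left (tvDist_le_sum_walsh W Y₁ Y₂ Y₃ x) (by positivity)
    _ = K / (4 * n ^ 2 * D * N ^ 2) * ∑ φ, (∑ v, A φ v) * ((∑ v, B φ v) + ∑ v, C φ v) := by
        simp_rw [sum_zeroSumTriples, ← sum_sum_mul_add_add, mul_sum]
        symm
        rw [sum_comm]
        refine sum_congr rfl fun v₁ _ => ?_
        rw [sum_comm]
        exact sum_congr rfl fun v₂ _ => sum_congr rfl fun φ _ => by field_simp
    _ ≤ K / (4 * n ^ 2 * D * N ^ 2) * ∑ φ, (2 * n * N * ε) * ((∑ v, B φ v) + ∑ v, C φ v) := by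
        gcongr with φ
        exact hbias φ
    _ = ε * K := by
        rw [← mul_sum, sum_add_distrib, sum_sum_walsh_fiberIndicator_sq,
          sum_sum_walsh_fiberIndicator_sq]
        field_simp
        ring

end ConditionalLaws

open scoped Classical in
/-- If each character `χ` of a subspace `W ≤ V`, applied to `X₁`, is (on average over
`(x,y) ← P_{X,Y}`) close to uniform after conditioning on the coset `X ∈ x + W³` and
on `Y₁ = y₁`, then the joint law of `Y = (Y₁,Y₂,Y₃)` under `P` conditioned on the
coset is close (on average) to its law under the uniform distribution `U` on `V³`,
with loss `√(|𝒴₂|·|𝒴₃|)`.  Here `P` is uniform on `{x ∈ V³ : x₁+x₂+x₃=0}`, each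
`Yᵢ` is a function of `Xᵢ`, and characters of `W` are represented by (affine
extensions of) `F₂`-linear functionals `φ : V → F₂` via `χ = (−1)^φ`. -/
theorem stmt_14 (V : Type) [AddCommGroup V] [Module (ZMod 2) V] [Fintype V]
    (W : Submodule (ZMod 2) V)
    (𝒴₁ 𝒴₂ 𝒴₃ : Type) [Fintype 𝒴₁] [Fintype 𝒴₂] [Fintype 𝒴₃]
    (Y₁ : V → 𝒴₁) (Y₂ : V → 𝒴₂) (Y₃ : V → 𝒴₃) (ε : ℝ)
    -- `S0` is the support of `P`
    (S0 : Finset (V × V × V))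
    (hS0 : S0 = Finset.univ.filter (fun x : V × V × V => x.1 + x.2.1 + x.2.2 = 0))
    -- the coset event `X ∈ x + W³`
    (coset : (V × V × V) → (V × V × V) → Prop)
    (hcoset : ∀ x x', coset x x' ↔
      (x'.1 - x.1 ∈ W ∧ x'.2.1 - x.2.1 ∈ W ∧ x'.2.2 - x.2.2 ∈ W))
    -- hypothesis: for every character of `W`,
    -- `E_{(x,y)←P_{X,Y}}[d_TV(P_{χ(X₁) | X ∈ x+W³, Y₁=y₁}, U_{χ(X₁) | X ∈ x+W³})] ≤ ε`
    (hchar : ∀ φ : V →ₗ[ZMod 2] ZMod 2,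
      ∑ x ∈ S0, (1 / (S0.card : ℝ)) *
        ((1 / 2) * ∑ b : ZMod 2,
          |((S0.filter (fun x' => coset x x' ∧ Y₁ x'.1 = Y₁ x.1 ∧ φ x'.1 = b)).card : ℝ) /
              ((S0.filter (fun x' => coset x x' ∧ Y₁ x'.1 = Y₁ x.1)).card : ℝ) -
            ((Finset.univ.filter (fun x' => coset x x' ∧ φ x'.1 = b)).card : ℝ) /
              ((Finset.univ.filter (fun x' => coset x x')).card : ℝ)|) ≤ ε) :
    -- conclusion:
    -- `E_{x←P_X}[d_TV(P_{Y | X ∈ x+W³}, U_{Y | X ∈ x+W³})] ≤ ε·√(|𝒴₂|·|𝒴₃|)`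
    ∑ x ∈ S0, (1 / (S0.card : ℝ)) *
      ((1 / 2) * ∑ y : 𝒴₁ × 𝒴₂ × 𝒴₃,
        |((S0.filter (fun x' => coset x x' ∧
              Y₁ x'.1 = y.1 ∧ Y₂ x'.2.1 = y.2.1 ∧ Y₃ x'.2.2 = y.2.2)).card : ℝ) /
            ((S0.filter (fun x' => coset x x')).card : ℝ) -
          ((Finset.univ.filter (fun x' => coset x x' ∧
              Y₁ x'.1 = y.1 ∧ Y₂ x'.2.1 = y.2.1 ∧ Y₃ x'.2.2 = y.2.2)).card : ℝ) /
            ((Finset.univ.filter (fun x' => coset x x')).card : ℝ)|) ≤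
      ε * Real.sqrt ((Fintype.card 𝒴₂ : ℝ) * (Fintype.card 𝒴₃ : ℝ)) := by
  obtain rfl : coset = InCoset W := funext₂ fun x x' => propext (hcoset x x')
  obtain rfl : S0 = zeroSumTriples := hS0
  have hbias (φ : V →ₗ[ZMod 2] ZMod 2) :=
    sum_sum_abs_walsh_centeredFiber_le W Y₁ ε φ <| (hchar φ).trans_eq' <|
      sum_congr rfl fun x hx => by rw [tvDist_char_eq Y₁ hx]
  refine (sum_tvDist_le_of_walsh_bias W Y₁ Y₂ Y₃ ε hbias).trans_eq' <|
    sum_congr rfl fun x hx => ?_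
  simp_rw [condProb_sub_condProb_eq Y₁ Y₂ Y₃ hx]
end

section
/- Let P = Q_GHZ^n on F_2^{3×n} (uniform on matrices with columns summing to zero in F_2^3), let E be an event with P(E) = e^{−Δ}, and let P̃ = P | E. For any δ > 0 and m ∈ ℤ⁺, there exists an affine partition Π of F_2^{3×n} of codimension at most m·Δ/δ such that E_{π ← P̃_{Π(X)}}[ d_m( P̃_{X | X∈π} ‖ P_{X | X∈π} ) ] ≤ δ. -/
/-!
Energy increment. Measure an affine partition `Π` by the divergence between the laws of
`Π(X)` for `X` uniform on `T = S0 ∩ E` and on `S0`; it is nonnegative and at most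
`log (|S0| / |T|) = Δ`. If maps `φ = σ(π)` witness an average divergence above `δ`, refining
each part by `ker φ` raises this potential by exactly that average (chain rule for KL), and
costs at most `m` dimensions; shrinking the refined subspaces to a common dimension refines
further, which cannot lower the potential. So `codim * δ ≤ m * potential ≤ m * Δ` is kept
along the iteration, which must stop at a pseudorandom partition.
-/

open Finset Real Module
open scoped Classical

/-- The KL divergence between the laws of the `r`-class of a uniform random point of `T` and
of `S`. -/
noncomputable def partitionKL {α : Type*} (r : α → α → Prop) (T S : Finset α) : ℝ :=
  (∑ x ∈ T, log ((#{y ∈ T | r x y} / #T) / (#{y ∈ S | r x y} / #S) : ℝ)) / #T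

section PartitionKL

variable {α : Type*} {r r₁ r₂ : α → α → Prop} {T S U : Finset α} {x y : α}

lemma card_filter_rel_pos (hrx : r x x) (hx : x ∈ U) : (0 : ℝ) < #{y ∈ U | r x y} := by
  exact_mod_cast card_pos.2 ⟨x, mem_filter.2 ⟨hx, hrx⟩⟩

lemma filter_rel_eq_of_rel (hr : Equivalence r) (hxy : r x y) :
    {w ∈ U | r y w} = {w ∈ U | r x w} :=
  filter_congr fun _ _ => ⟨hr.trans hxy, hr.trans (hr.symm hxy)⟩

lemma sum_sum_filter_rel_comm (hr : Equivalence r) (A B : Finset α) (f : α → α → ℝ) :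
    ∑ x ∈ A, ∑ y ∈ B with r x y, f x y = ∑ y ∈ B, ∑ x ∈ A with r y x, f x y :=
  sum_comm' fun x y => by
    simp only [mem_filter]
    exact ⟨fun ⟨hx, hy, h⟩ => ⟨⟨hx, hr.symm h⟩, hy⟩, fun ⟨⟨hx, h⟩, hy⟩ => ⟨hx, hy, hr.symm h⟩⟩

lemma sum_average_over_parts (hr : Equivalence r) (g : α → ℝ) :
    ∑ x ∈ U, (∑ y ∈ U with r x y, g y) / #{y ∈ U | r x y} = ∑ x ∈ U, g x := by
  have hpart : ∀ x ∈ U, (∑ y ∈ U with r x y, g y) / #{y ∈ U | r x y}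
      = ∑ y ∈ U with r x y, g y / #{w ∈ U | r y w} := by
    intro x _
    rw [sum_div]
    refine sum_congr rfl fun y hy => ?_
    rw [filter_rel_eq_of_rel hr (mem_filter.1 hy).2]
  rw [sum_congr rfl hpart, sum_sum_filter_rel_comm hr]
  refine sum_congr rfl fun y hy => ?_
  rw [sum_const, nsmul_eq_mul]
  field_simp [(card_filter_rel_pos (hr.refl _) hy).ne']

lemma sum_card_filter_div_card_filter_le (hr : Equivalence r) (T S : Finset α) :
    ∑ x ∈ T, (#{y ∈ S | r x y} : ℝ) / #{y ∈ T | r x y} ≤ #S := by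
  calc ∑ x ∈ T, (#{y ∈ S | r x y} : ℝ) / #{y ∈ T | r x y}
      = ∑ x ∈ T, ∑ w ∈ S with r x w, (1 : ℝ) / #{y ∈ T | r w y} := by
        refine sum_congr rfl fun x _ => ?_
        rw [← sum_congr rfl fun w hw => by rw [filter_rel_eq_of_rel hr (mem_filter.1 hw).2],
          sum_const, nsmul_eq_mul, mul_one_div]
    _ = ∑ w ∈ S, (#{y ∈ T | r w y} : ℝ) / #{y ∈ T | r w y} := by
        rw [sum_sum_filter_rel_comm hr]
        simp only [sum_const, nsmul_eq_mul, mul_one_div]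
    _ ≤ ∑ w ∈ S, 1 := sum_le_sum fun _ _ => div_self_le_one _
    _ = #S := by simp

lemma partitionKL_nonneg (hr : Equivalence r) (hTS : T ⊆ S) : 0 ≤ partitionKL r T S := by
  rcases T.eq_empty_or_nonempty with rfl | hT
  · simp [partitionKL]
  have hTpos : (0 : ℝ) < #T := by exact_mod_cast hT.card_pos
  have hSpos : (0 : ℝ) < #S := by exact_mod_cast (hT.mono hTS).card_pos
  have gibbs : ∀ x ∈ T, 1 - #T / #S * (#{y ∈ S | r x y} / #{y ∈ T | r x y})
      ≤ log ((#{y ∈ T | r x y} / #T) / (#{y ∈ S | r x y} / #S) : ℝ) := by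
    intro x hx
    have hTx := card_filter_rel_pos (r := r) (hr.refl _) hx
    have hSx := card_filter_rel_pos (r := r) (hr.refl _) (hTS hx)
    convert one_sub_inv_le_log_of_pos (by positivity :
      (0 : ℝ) < (#{y ∈ T | r x y} / #T) / (#{y ∈ S | r x y} / #S)) using 2
    field_simp
  have hcount := sum_card_filter_div_card_filter_le hr T S
  refine div_nonneg ?_ hTpos.le
  calc (0 : ℝ) = #T - #T / #S * #S := by field_simp; ring
    _ ≤ ∑ x ∈ T, (1 - (#T : ℝ) / #S * (#{y ∈ S | r x y} / #{y ∈ T | r x y})) := by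
        rw [sum_sub_distrib, ← mul_sum, sum_const, nsmul_one]
        gcongr
    _ ≤ _ := sum_le_sum gibbs

lemma partitionKL_le_log_card_div (hr : ∀ x, r x x) (hTS : T ⊆ S) (hT : T.Nonempty) :
    partitionKL r T S ≤ log (#S / #T) := by
  have hTpos : (0 : ℝ) < #T := by exact_mod_cast hT.card_pos
  have hSpos : (0 : ℝ) < #S := by exact_mod_cast (hT.mono hTS).card_pos
  have hterm : ∀ x ∈ T,
      log ((#{y ∈ T | r x y} / #T) / (#{y ∈ S | r x y} / #S) : ℝ) ≤ log (#S / #T) := by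
    intro x hx
    have hTx := card_filter_rel_pos (hr x) hx
    have hSx := card_filter_rel_pos (hr x) (hTS hx)
    have hle : (#{y ∈ T | r x y} : ℝ) ≤ #{y ∈ S | r x y} := by
      exact_mod_cast card_le_card (filter_subset_filter _ hTS)
    refine log_le_log (by positivity) ?_
    calc (#{y ∈ T | r x y} / #T) / (#{y ∈ S | r x y} / #S : ℝ)
        = #{y ∈ T | r x y} / #{y ∈ S | r x y} * (#S / #T) := by field_simp
      _ ≤ 1 * (#S / #T) := by gcongr; exact div_le_one_of_le₀ hle hSx.le
      _ = #S / #T := one_mul _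
  rw [partitionKL, div_le_iff₀ hTpos]
  calc _ ≤ ∑ x ∈ T, log (#S / #T : ℝ) := sum_le_sum hterm
    _ = _ := by rw [sum_const, nsmul_eq_mul, mul_comm]

lemma partitionKL_self (r : α → α → Prop) (U : Finset α) : partitionKL r U U = 0 := by
  simp [partitionKL]

lemma partitionKL_congr {r' : α → α → Prop} (h : ∀ x ∈ S, ∀ y ∈ S, r x y ↔ r' x y)
    (hTS : T ⊆ S) : partitionKL r T S = partitionKL r' T S := by
  have hfilter : ∀ x ∈ S, ∀ U ⊆ S, {y ∈ U | r x y} = {y ∈ U | r' x y} :=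
    fun x hx U hU => filter_congr fun y hy => h x hx y (hU hy)
  unfold partitionKL
  congr 1
  refine sum_congr rfl fun x hx => ?_
  rw [hfilter x (hTS hx) T hTS, hfilter x (hTS hx) S subset_rfl]

lemma filter_filter_rel_of_le (h₁ : Equivalence r₁) (h : r₂ ≤ r₁) (hxy : r₁ x y) :
    {w ∈ {y ∈ U | r₁ x y} | r₂ y w} = {w ∈ U | r₂ y w} := by
  rw [filter_filter]
  exact filter_congr fun w _ => ⟨And.right, fun hw => ⟨h₁.trans hxy (h y w hw), hw⟩⟩

theorem partitionKL_eq_add_of_le (h₁ : Equivalence r₁) (h₂ : Equivalence r₂) (h : r₂ ≤ r₁)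
    (hTS : T ⊆ S) :
    partitionKL r₂ T S = partitionKL r₁ T S +
      (∑ x ∈ T, partitionKL r₂ {y ∈ T | r₁ x y} {y ∈ S | r₁ x y}) / #T := by
  rcases T.eq_empty_or_nonempty with rfl | hT
  · simp [partitionKL]
  have hTpos : (0 : ℝ) < #T := by exact_mod_cast hT.card_pos
  have hSpos : (0 : ℝ) < #S := by exact_mod_cast (hT.mono hTS).card_pos
  set c : α → ℝ := fun x => log ((#{y ∈ T | r₂ x y} / #{y ∈ T | r₁ x y}) /
    (#{y ∈ S | r₂ x y} / #{y ∈ S | r₁ x y}) : ℝ) with hc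
  have hsplit : ∀ x ∈ T, log ((#{y ∈ T | r₂ x y} / #T) / (#{y ∈ S | r₂ x y} / #S) : ℝ)
      = log ((#{y ∈ T | r₁ x y} / #T) / (#{y ∈ S | r₁ x y} / #S) : ℝ) + c x := by
    intro x hx
    have hT₂ := card_filter_rel_pos (U := T) (h₂.refl x) hx
    have hS₂ := card_filter_rel_pos (U := S) (h₂.refl x) (hTS hx)
    have hT₁ := card_filter_rel_pos (U := T) (h₁.refl x) hx
    have hS₁ := card_filter_rel_pos (U := S) (h₁.refl x) (hTS hx)
    rw [hc, ← log_mul (by positivity) (by positivity)]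
    congr 1
    field_simp
  have hpart : ∀ x ∈ T, partitionKL r₂ {y ∈ T | r₁ x y} {y ∈ S | r₁ x y}
      = (∑ y ∈ T with r₁ x y, c y) / #{y ∈ T | r₁ x y} := by
    intro x _
    unfold partitionKL
    congr 1
    refine sum_congr rfl fun y hy => ?_
    have hxy := (mem_filter.1 hy).2
    rw [filter_filter_rel_of_le h₁ h hxy, filter_filter_rel_of_le h₁ h hxy,
      ← filter_rel_eq_of_rel (U := T) h₁ hxy, ← filter_rel_eq_of_rel (U := S) h₁ hxy]
  rw [sum_congr rfl hpart, sum_average_over_parts h₁, partitionKL, partitionKL,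
    sum_congr rfl hsplit, sum_add_distrib, add_div]

lemma partitionKL_le_of_le (h₁ : Equivalence r₁) (h₂ : Equivalence r₂) (h : r₂ ≤ r₁)
    (hTS : T ⊆ S) : partitionKL r₁ T S ≤ partitionKL r₂ T S := by
  rw [partitionKL_eq_add_of_le h₁ h₂ h hTS, le_add_iff_nonneg_right]
  exact div_nonneg (sum_nonneg fun x _ =>
    partitionKL_nonneg h₂ (filter_subset_filter _ hTS)) (Nat.cast_nonneg _)

lemma partitionKL_eq_sum_fiber {β : Type*} [Fintype β] [DecidableEq β] (f : α → β)
    (A B : Finset α) :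
    partitionKL (fun y w => f y = f w) A B = ∑ z, (#{y ∈ A | f y = z} / #A : ℝ) *
      log ((#{y ∈ A | f y = z} / #A) / (#{y ∈ B | f y = z} / #B) : ℝ) := by
  have hfiber : ∀ (U : Finset α) (y : α), {w ∈ U | f y = f w} = {w ∈ U | f w = f y} :=
    fun U y => filter_congr fun _ _ => eq_comm
  simp only [partitionKL, hfiber]
  rw [← sum_fiberwise A f, sum_div]
  refine sum_congr rfl fun z _ => ?_
  rw [sum_congr rfl fun y hy => by rw [(mem_filter.1 hy).2], sum_const, nsmul_eq_mul]
  ring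

end PartitionKL

section AffinePartition

variable {ι K M N : Type*} [Field K] [AddCommGroup M] [Module K M] [AddCommGroup N] [Module K N]
  {V W : (ι → M) → Submodule K M} {σ : (ι → M) → M →ₗ[K] N} {T S : Finset (ι → M)}

def affineRel (V : (ι → M) → Submodule K M) (x y : ι → M) : Prop := ∀ i, y i - x i ∈ V x

/-- The sets `x + V(x)^ι` form a partition of `ι → M`. -/
def IsAffinePartition (V : (ι → M) → Submodule K M) : Prop :=
  ∀ x y, affineRel V x y → V y = V x

lemma IsAffinePartition.equivalence (hV : IsAffinePartition V) : Equivalence (affineRel V) where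
  refl x i := by simp
  symm {x y} h i := by
    rw [hV x y h, ← neg_sub]
    exact neg_mem (h i)
  trans {x y z} h₁ h₂ i := by
    rw [← sub_add_sub_cancel (z i) (y i) (x i)]
    exact add_mem (hV x y h₁ ▸ h₂ i) (h₁ i)

lemma affineRel_mono (h : ∀ x, W x ≤ V x) : affineRel W ≤ affineRel V :=
  fun x _ hxy i => h x (hxy i)

lemma isAffinePartition_top : IsAffinePartition fun _ : ι → M => (⊤ : Submodule K M) :=
  fun _ _ _ => rfl

lemma isAffinePartition_of_le (hWV : ∀ x, W x ≤ V x)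
    (hW : ∀ x y, affineRel V x y → W y = W x) : IsAffinePartition W :=
  fun x y hxy => hW x y (affineRel_mono hWV x y hxy)

lemma IsAffinePartition.inf_ker (hV : IsAffinePartition V)
    (hσ : ∀ x y, affineRel V x y → σ y = σ x) :
    IsAffinePartition fun x => V x ⊓ LinearMap.ker (σ x) :=
  isAffinePartition_of_le (fun _ => inf_le_left) fun x y h => by rw [hV x y h, hσ x y h]

lemma affineRel_inf_ker_iff (hV : IsAffinePartition V) (hσ : ∀ x y, affineRel V x y → σ y = σ x)
    {x y w : ι → M} (hy : affineRel V x y) (hw : affineRel V x w) :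
    affineRel (fun a => V a ⊓ LinearMap.ker (σ a)) y w ↔ σ x ∘ y = σ x ∘ w := by
  have hyw : affineRel V y w := hV.equivalence.trans (hV.equivalence.symm hy) hw
  simp only [affineRel, Submodule.mem_inf, forall_and] at hyw ⊢
  rw [and_iff_right hyw, hσ x y hy]
  simp only [LinearMap.mem_ker, map_sub, sub_eq_zero, funext_iff, Function.comp_apply]
  exact forall_congr' fun _ => eq_comm

/-- `E_{π ← P̃_Π}[KL(σ(π)^ι P̃_π ‖ σ(π)^ι P_π)]` with `P̃`, `P` uniform on `T`, `S`. -/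
noncomputable def expectedPartKL (V : (ι → M) → Submodule K M) (σ : (ι → M) → M →ₗ[K] N)
    (T S : Finset (ι → M)) : ℝ :=
  (∑ x ∈ T, partitionKL (fun y w => σ x ∘ y = σ x ∘ w)
    {y ∈ T | affineRel V x y} {y ∈ S | affineRel V x y}) / #T

theorem partitionKL_inf_ker (hV : IsAffinePartition V)
    (hσ : ∀ x y, affineRel V x y → σ y = σ x) (hTS : T ⊆ S) :
    partitionKL (affineRel fun x => V x ⊓ LinearMap.ker (σ x)) T S
      = partitionKL (affineRel V) T S + expectedPartKL V σ T S := by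
  rw [partitionKL_eq_add_of_le hV.equivalence (hV.inf_ker hσ).equivalence
    (affineRel_mono fun _ => inf_le_left) hTS, expectedPartKL]
  congr 2
  refine sum_congr rfl fun x _ => partitionKL_congr (fun y hy w hw => ?_)
    (filter_subset_filter _ hTS)
  exact affineRel_inf_ker_iff hV hσ (mem_filter.1 hy).2 (mem_filter.1 hw).2

lemma expectedPartKL_eq_zero_of_eq_bot (hV : ∀ x, V x = ⊥) (hTS : T ⊆ S)
    (σ : (ι → M) → M →ₗ[K] N) : expectedPartKL V σ T S = 0 := by
  have hpart : ∀ x ∈ T, {y ∈ S | affineRel V x y} = {y ∈ T | affineRel V x y} := by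
    intro x hx
    have hsingle : ∀ y, affineRel V x y ↔ y = x := by
      simp [affineRel, hV, sub_eq_zero, funext_iff]
    ext y
    simp only [mem_filter, hsingle]
    exact ⟨fun h => ⟨h.2 ▸ hx, h.2⟩, fun h => ⟨hTS h.1, h.2⟩⟩
  rw [expectedPartKL, sum_congr rfl fun x hx => by rw [hpart x hx, partitionKL_self]]
  simp

end AffinePartition

section Dimension

variable {K M N : Type*} [Field K] [AddCommGroup M] [Module K M] [AddCommGroup N] [Module K N]
  [FiniteDimensional K M]

lemma Submodule.finrank_le_finrank_inf_ker_add [FiniteDimensional K N] (W : Submodule K M)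
    (φ : M →ₗ[K] N) : finrank K W ≤ finrank K ↥(W ⊓ LinearMap.ker φ) + finrank K N := by
  have h₁ := Submodule.finrank_sup_add_finrank_inf_eq W (LinearMap.ker φ)
  have h₂ := φ.finrank_range_add_finrank_ker
  have h₃ := Submodule.finrank_le (W ⊔ LinearMap.ker φ)
  have h₄ := Submodule.finrank_le (LinearMap.range φ)
  omega

lemma Submodule.exists_le_finrank_eq (W : Submodule K M) {k : ℕ} (hk : k ≤ finrank K W) :
    ∃ U ≤ W, finrank K U = k := by
  let b := Module.finBasis K W
  refine ⟨(Submodule.span K (Set.range (b ∘ Fin.castLE hk))).map W.subtype,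
    Submodule.map_subtype_le _ _, ?_⟩
  rw [Submodule.finrank_map_subtype_eq,
    finrank_span_eq_card (b.linearIndependent.comp _ (Fin.castLE_injective hk)), Fintype.card_fin]

end Dimension

section Decomposition

variable {ι K M N : Type*} [Field K] [AddCommGroup M] [Module K M] [AddCommGroup N] [Module K N]
  [FiniteDimensional K M] [FiniteDimensional K N]
  {V : (ι → M) → Submodule K M} {σ : (ι → M) → M →ₗ[K] N} {T S : Finset (ι → M)} {d : ℕ}

lemma IsAffinePartition.exists_refinement_inf_ker (hV : IsAffinePartition V)
    (hd : ∀ x, finrank K (V x) = d) (hσ : ∀ x y, affineRel V x y → σ y = σ x) :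
    ∃ W : (ι → M) → Submodule K M, IsAffinePartition W ∧
      (∀ x, finrank K (W x) = d - finrank K N) ∧ ∀ x, W x ≤ V x ⊓ LinearMap.ker (σ x) := by
  choose! g hg using fun U : Submodule K M =>
    fun hU : d - finrank K N ≤ finrank K U => U.exists_le_finrank_eq hU
  have hdim : ∀ x, d - finrank K N ≤ finrank K ↥(V x ⊓ LinearMap.ker (σ x)) := fun x => by
    have := (V x).finrank_le_finrank_inf_ker_add (σ x)
    have := hd x
    omega
  refine ⟨fun x => g (V x ⊓ LinearMap.ker (σ x)), ?_, fun x => (hg _ (hdim x)).2,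
    fun x => (hg _ (hdim x)).1⟩
  exact isAffinePartition_of_le (fun x => (hg _ (hdim x)).1.trans inf_le_left)
    fun x y h => by simp only [hV x y h, hσ x y h]

theorem IsAffinePartition.exists_refinement_expectedPartKL_le (hN : 0 < finrank K N)
    (hTS : T ⊆ S) {δ : ℝ} (hδ : 0 ≤ δ) (hV : IsAffinePartition V)
    (hd : ∀ x, finrank K (V x) = d)
    (hpot : (finrank K M - d : ℝ) * δ ≤ finrank K N * partitionKL (affineRel V) T S) :
    ∃ (d' : ℕ) (W : (ι → M) → Submodule K M), (∀ x, finrank K (W x) = d') ∧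
      IsAffinePartition W ∧
      (finrank K M - d' : ℝ) * δ ≤ finrank K N * partitionKL (affineRel W) T S ∧
      ∀ σ : (ι → M) → M →ₗ[K] N, (∀ x y, affineRel W x y → σ y = σ x) →
        expectedPartKL W σ T S ≤ δ := by
  induction d using Nat.strong_induction_on generalizing V with
  | _ d ih =>
  by_cases hgood : ∀ σ : (ι → M) → M →ₗ[K] N, (∀ x y, affineRel V x y → σ y = σ x) →
      expectedPartKL V σ T S ≤ δ
  · exact ⟨d, V, hd, hV, hpot, hgood⟩
  push Not at hgood
  obtain ⟨σ, hσ, hbad⟩ := hgood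
  have hd0 : d ≠ 0 := by
    rintro rfl
    have := expectedPartKL_eq_zero_of_eq_bot (fun x => Submodule.finrank_eq_zero.1 (hd x)) hTS σ
    linarith
  obtain ⟨W, hW, hWd, hWle⟩ := hV.exists_refinement_inf_ker hd hσ
  have hgain : partitionKL (affineRel V) T S + expectedPartKL V σ T S
      ≤ partitionKL (affineRel W) T S := by
    rw [← partitionKL_inf_ker hV hσ hTS]
    exact partitionKL_le_of_le (hV.inf_ker hσ).equivalence hW.equivalence
      (affineRel_mono hWle) hTS
  have hdd : (d : ℝ) ≤ (d - finrank K N : ℕ) + finrank K N := by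
    exact_mod_cast le_tsub_add
  have hNpos : (0 : ℝ) < finrank K N := by exact_mod_cast hN
  refine ih (d - finrank K N) (by omega) hW hWd ?_
  nlinarith

theorem exists_isAffinePartition_expectedPartKL_le (hN : 0 < finrank K N) (hTS : T ⊆ S)
    (hT : T.Nonempty) {δ : ℝ} (hδ : 0 < δ) :
    ∃ (d : ℕ) (W : (ι → M) → Submodule K M), (∀ x, finrank K (W x) = d) ∧
      IsAffinePartition W ∧
      (finrank K M - d : ℝ) ≤ finrank K N * log (#S / #T) / δ ∧
      ∀ σ : (ι → M) → M →ₗ[K] N, (∀ x y, affineRel W x y → σ y = σ x) →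
        expectedPartKL W σ T S ≤ δ := by
  have hstart : (finrank K M - finrank K M : ℝ) * δ ≤
      finrank K N * partitionKL (affineRel fun _ : ι → M => (⊤ : Submodule K M)) T S := by
    rw [sub_self, zero_mul]
    exact mul_nonneg (Nat.cast_nonneg _) (partitionKL_nonneg isAffinePartition_top.equivalence hTS)
  obtain ⟨d, W, hd, hW, hpot, hKL⟩ := isAffinePartition_top.exists_refinement_expectedPartKL_le
    hN hTS hδ.le (fun _ => finrank_top K M) hstart
  refine ⟨d, W, hd, hW, ?_, hKL⟩
  rw [le_div_iff₀ hδ]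
  refine hpot.trans (mul_le_mul_of_nonneg_left ?_ (Nat.cast_nonneg _))
  exact partitionKL_le_log_card_div hW.equivalence.refl hTS hT

end Decomposition

open scoped Classical in
theorem stmt_15_general (n m : ℕ) (hm : 0 < m) (δ Δ : ℝ) (hδ : 0 < δ)
    (S0 : Finset (Fin 3 → Fin n → ZMod 2))
    (E : Finset (Fin 3 → Fin n → ZMod 2))
    (hΔ : ((S0 ∩ E).card : ℝ) / (S0.card : ℝ) = Real.exp (-Δ)) :
    ∃ (d : ℕ) (Vsp : (Fin 3 → Fin n → ZMod 2) → Submodule (ZMod 2) (Fin n → ZMod 2)),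
      (∀ x, Module.finrank (ZMod 2) (Vsp x) = d) ∧
      -- the sets `x + Vsp(x)³` form a partition
      (∀ x y, (∀ i : Fin 3, y i - x i ∈ Vsp x) → Vsp y = Vsp x) ∧
      -- codimension bound
      ((n : ℝ) - d ≤ m * Δ / δ) ∧
      -- pseudorandomness: for every per-part choice of a linear map `φ = σ(π)`
      (∀ σ : (Fin 3 → Fin n → ZMod 2) →
          ((Fin n → ZMod 2) →ₗ[ZMod 2] (Fin m → ZMod 2)),
        (∀ x y, (∀ i : Fin 3, y i - x i ∈ Vsp x) → σ y = σ x) →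
        ∑ x ∈ S0 ∩ E, (1 / ((S0 ∩ E).card : ℝ)) *
          (∑ z : Fin 3 → Fin m → ZMod 2,
            (((S0 ∩ E).filter (fun y => (∀ i, y i - x i ∈ Vsp x) ∧
                  ∀ i, σ x (y i) = z i)).card : ℝ) /
                (((S0 ∩ E).filter (fun y => ∀ i, y i - x i ∈ Vsp x)).card : ℝ) *
              Real.log
                ((((S0 ∩ E).filter (fun y => (∀ i, y i - x i ∈ Vsp x) ∧
                      ∀ i, σ x (y i) = z i)).card : ℝ) /
                    (((S0 ∩ E).filter (fun y => ∀ i, y i - x i ∈ Vsp x)).card : ℝ) /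
                  ((((S0.filter (fun y => (∀ i, y i - x i ∈ Vsp x) ∧
                        ∀ i, σ x (y i) = z i)).card : ℝ)) /
                    ((S0.filter (fun y => ∀ i, y i - x i ∈ Vsp x)).card : ℝ)))) ≤ δ) := by
  have hTS : S0 ∩ E ⊆ S0 := inter_subset_left
  have hT : (S0 ∩ E).Nonempty := by
    rw [nonempty_iff_ne_empty]
    intro h
    simp [h, (exp_pos _).ne] at hΔ
  have hlog : log (#S0 / #(S0 ∩ E)) = Δ := by
    rw [← inv_div, log_inv, hΔ, log_exp, neg_neg]
  obtain ⟨d, V, hd, hV, hcodim, hKL⟩ := exists_isAffinePartition_expectedPartKL_le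
    (K := ZMod 2) (N := Fin m → ZMod 2) (by simpa using hm) hTS hT hδ
  refine ⟨d, V, hd, hV, by simpa [hlog] using hcodim, fun σ hσ => ?_⟩
  convert hKL σ hσ using 1
  rw [expectedPartKL, sum_div]
  refine sum_congr rfl fun x _ => ?_
  have hpart : ∀ U : Finset (Fin 3 → Fin n → ZMod 2),
      {y ∈ U | affineRel V x y} = {y ∈ U | ∀ i, y i - x i ∈ V x} :=
    fun U => filter_congr fun _ _ => Iff.rfl
  have hfiber : ∀ (U : Finset (Fin 3 → Fin n → ZMod 2)) (z : Fin 3 → Fin m → ZMod 2),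
      {y ∈ {y ∈ U | affineRel V x y} | σ x ∘ y = z}
        = {y ∈ U | (∀ i, y i - x i ∈ V x) ∧ ∀ i, σ x (y i) = z i} := fun U z => by
    rw [filter_filter]
    exact filter_congr fun _ _ => and_congr Iff.rfl funext_iff
  rw [partitionKL_eq_sum_fiber, one_div_mul_eq_div]
  simp only [hfiber]
  simp only [hpart]

open scoped Classical in
/-- Decomposition into pseudorandom affine components.  `P = Q_GHZ^n` is uniform on
matrices in `F₂^{3×n}` whose columns sum to zero (support `S0`), `E` is an event of
probability `e^{−Δ}`, and `P̃ = P | E`.  For any `δ > 0`, `m ≥ 1` there is an affine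
partition `Π` of `F₂^{3×n}` — encoded by a map `Vsp` assigning to each point the
subspace `V(x) ≤ F₂ⁿ` (all of dimension `d`, the part of `x` being `x + V(x)³`) —
of codimension `n − d ≤ m·Δ/δ` such that
`E_{π←P̃_{Π(X)}}[ d_m(P̃_{X|X∈π} ‖ P_{X|X∈π}) ] ≤ δ`, where `d_m` is the supremum
over linear maps `φ : F₂ⁿ → F₂^m` (chosen per part, i.e. over selections `σ`
constant on parts) of the KL divergence between the pushforwards under
`φ³ = φ × φ × φ`. -/
theorem stmt_15 (n m : ℕ) (hm : 0 < m) (δ Δ : ℝ) (hδ : 0 < δ)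
    (S0 : Finset (Fin 3 → Fin n → ZMod 2))
    (hS0 : S0 = Finset.univ.filter (fun x => ∀ j : Fin n, x 0 j + x 1 j + x 2 j = 0))
    (E : Finset (Fin 3 → Fin n → ZMod 2))
    (hΔ : ((S0 ∩ E).card : ℝ) / (S0.card : ℝ) = Real.exp (-Δ)) :
    ∃ (d : ℕ) (Vsp : (Fin 3 → Fin n → ZMod 2) → Submodule (ZMod 2) (Fin n → ZMod 2)),
      (∀ x, Module.finrank (ZMod 2) (Vsp x) = d) ∧
      -- the sets `x + Vsp(x)³` form a partition
      (∀ x y, (∀ i : Fin 3, y i - x i ∈ Vsp x) → Vsp y = Vsp x) ∧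
      -- codimension bound
      ((n : ℝ) - d ≤ m * Δ / δ) ∧
      -- pseudorandomness: for every per-part choice of a linear map `φ = σ(π)`
      (∀ σ : (Fin 3 → Fin n → ZMod 2) →
          ((Fin n → ZMod 2) →ₗ[ZMod 2] (Fin m → ZMod 2)),
        (∀ x y, (∀ i : Fin 3, y i - x i ∈ Vsp x) → σ y = σ x) →
        ∑ x ∈ S0 ∩ E, (1 / ((S0 ∩ E).card : ℝ)) *
          (∑ z : Fin 3 → Fin m → ZMod 2,
            (((S0 ∩ E).filter (fun y => (∀ i, y i - x i ∈ Vsp x) ∧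
                  ∀ i, σ x (y i) = z i)).card : ℝ) /
                (((S0 ∩ E).filter (fun y => ∀ i, y i - x i ∈ Vsp x)).card : ℝ) *
              Real.log
                ((((S0 ∩ E).filter (fun y => (∀ i, y i - x i ∈ Vsp x) ∧
                      ∀ i, σ x (y i) = z i)).card : ℝ) /
                    (((S0 ∩ E).filter (fun y => ∀ i, y i - x i ∈ Vsp x)).card : ℝ) /
                  ((((S0.filter (fun y => (∀ i, y i - x i ∈ Vsp x) ∧
                        ∀ i, σ x (y i) = z i)).card : ℝ)) /
                    ((S0.filter (fun y => ∀ i, y i - x i ∈ Vsp x)).card : ℝ)))) ≤ δ) :=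
  stmt_15_general n m hm δ Δ hδ S0 E hΔ
end

section
/- Let P be a probability distribution on a finite set, X a random variable, Π an affine partition (or any finite partition), and define the potential Φ(Π) = E_{π ← P̃_{Π(X)}}[ d_KL(P̃_{X|X∈π} ‖ P_{X|X∈π}) ] where P̃ = P|E for an event E with P(E) = e^{−Δ}. If Π' refines Π by intersecting each part with level sets of a function φ, then Φ(Π') ≤ Φ(Π) − d_KL(P̃_{φ(X)|Π(X)} ‖ P_{φ(X)|Π(X)}). In particular, for the trivial partition Π_0 = {Ω}, Φ(Π_0) = Δ. -/
open Finset

/-- Conditional KL divergence of the law of `f(X)` given the part `c(X)` of a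
partition (parts = fibers of `c`), between distributions `Pt` and `P`:
`∑_i Pt(c=i) · d_KL(Pt_{f(X)|c=i} ‖ P_{f(X)|c=i})`.
With `f` the identity this is the potential `Φ(Π)` of the partition `c`. -/
noncomputable def condKL {Ω I J : Type*} [Fintype Ω] [Fintype I] [Fintype J]
    [DecidableEq I] [DecidableEq J] (Pt P : Ω → ℝ) (c : Ω → I) (f : Ω → J) : ℝ :=
  ∑ i : I, (∑ ω, if c ω = i then Pt ω else 0) *
    ∑ j : J,
      ((∑ ω, if c ω = i ∧ f ω = j then Pt ω else 0) /
          (∑ ω, if c ω = i then Pt ω else 0)) *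
        Real.log
          (((∑ ω, if c ω = i ∧ f ω = j then Pt ω else 0) /
              (∑ ω, if c ω = i then Pt ω else 0)) /
            ((∑ ω, if c ω = i ∧ f ω = j then P ω else 0) /
              (∑ ω, if c ω = i then P ω else 0)))

/-!
Every quantity involved is a difference of KL divergences between laws of functions of `X`:
by the chain rule, `condKL c f = d_KL(P̃_{(c,f)(X)} ‖ P_{(c,f)(X)}) − d_KL(P̃_{c(X)} ‖ P_{c(X)})`.
The law of `(c(X), X)` carries the full divergence `d_KL(P̃ ‖ P)`, which is `ln (1 / P(E)) = Δ`
because `P̃` is proportional to `P` on its support. Hence `Φ(Π) = Δ − d_KL(P̃_{Π(X)} ‖ P_{Π(X)})`,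
and the claimed inequality holds with equality.
-/

open Real

noncomputable def lawKL {Ω K : Type*} [Fintype Ω] [Fintype K] [DecidableEq K]
    (Pt P : Ω → ℝ) (g : Ω → K) : ℝ :=
  ∑ k, (∑ ω, if g ω = k then Pt ω else 0) *
    log ((∑ ω, if g ω = k then Pt ω else 0) / (∑ ω, if g ω = k then P ω else 0))

lemma mul_div_mul_log_div_div {a A b B : ℝ} (h : a ≠ 0 → A ≠ 0 ∧ b ≠ 0 ∧ B ≠ 0) :
    A * (a / A * log (a / A / (b / B))) = a * log (a / b) - a * log (A / B) := by
  rcases eq_or_ne a 0 with rfl | ha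
  · simp
  obtain ⟨hA, hb, hB⟩ := h ha
  rw [div_div_div_eq, mul_comm A b, ← div_div_div_eq, log_div (by positivity) (by positivity)]
  field_simp

section Laws

variable {Ω : Type*} [Fintype Ω]

lemma sum_ite_pos_of_ne_zero {Pt P : Ω → ℝ} (hPt0 : ∀ ω, 0 ≤ Pt ω) (hP0 : ∀ ω, 0 ≤ P ω)
    (hac : ∀ ω, Pt ω ≠ 0 → 0 < P ω) {p q : Ω → Prop} [DecidablePred p] [DecidablePred q]
    (hpq : ∀ ω, p ω → q ω) (h : (∑ ω, if p ω then Pt ω else 0) ≠ 0) :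
    0 < (∑ ω, if q ω then Pt ω else 0) ∧ 0 < ∑ ω, if q ω then P ω else 0 := by
  obtain ⟨ω, -, hω⟩ := exists_ne_zero_of_sum_ne_zero h
  have hpω : p ω := by by_contra hp; simp [hp] at hω
  rw [if_pos hpω] at hω
  have hqω := hpq ω hpω
  constructor
  · refine sum_pos' (fun ω _ => ?_) ⟨ω, mem_univ _, by simpa [hqω] using (hPt0 ω).lt_of_ne' hω⟩
    split_ifs <;> simp [hPt0 ω]
  · refine sum_pos' (fun ω _ => ?_) ⟨ω, mem_univ _, by simpa [hqω] using hac ω hω⟩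
    split_ifs <;> simp [hP0 ω]

lemma sum_sum_ite_and_eq {I J : Type*} [Fintype J] [DecidableEq I] [DecidableEq J]
    (Q : Ω → ℝ) (c : Ω → I) (f : Ω → J) (i : I) :
    (∑ j, ∑ ω, if c ω = i ∧ f ω = j then Q ω else 0) = ∑ ω, if c ω = i then Q ω else 0 := by
  rw [sum_comm]
  refine sum_congr rfl fun ω _ => ?_
  by_cases hc : c ω = i <;> simp [hc]

theorem condKL_eq_lawKL_sub {I J : Type*} [Fintype I] [Fintype J] [DecidableEq I]
    [DecidableEq J] {Pt P : Ω → ℝ} (hPt0 : ∀ ω, 0 ≤ Pt ω) (hP0 : ∀ ω, 0 ≤ P ω)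
    (hac : ∀ ω, Pt ω ≠ 0 → 0 < P ω) (c : Ω → I) (f : Ω → J) :
    condKL Pt P c f = lawKL Pt P (fun ω => (c ω, f ω)) - lawKL Pt P c := by
  unfold condKL lawKL
  simp only [Fintype.sum_prod_type, Prod.mk.injEq]
  rw [← sum_sub_distrib]
  refine sum_congr rfl fun i _ => ?_
  have hfiber : (∑ ω, if c ω = i then Pt ω else 0) * log ((∑ ω, if c ω = i then Pt ω else 0) /
      ∑ ω, if c ω = i then P ω else 0) = ∑ j, (∑ ω, if c ω = i ∧ f ω = j then Pt ω else 0) *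
        log ((∑ ω, if c ω = i then Pt ω else 0) / ∑ ω, if c ω = i then P ω else 0) := by
    rw [← sum_mul, sum_sum_ite_and_eq]
  rw [hfiber, ← sum_sub_distrib, mul_sum]
  refine sum_congr rfl fun j _ => mul_div_mul_log_div_div fun h => ?_
  have hj := sum_ite_pos_of_ne_zero hPt0 hP0 hac (fun _ h => h) h
  have hi := sum_ite_pos_of_ne_zero hPt0 hP0 hac (fun _ h => And.left h) h
  exact ⟨hi.1.ne', hj.2.ne', hi.2.ne'⟩

lemma lawKL_of_injective {K : Type*} [Fintype K] [DecidableEq K] (Pt P : Ω → ℝ) {g : Ω → K}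
    (hg : Function.Injective g) : lawKL Pt P g = ∑ ω, Pt ω * log (Pt ω / P ω) := by
  refine (Fintype.sum_of_injective g hg _ _ (fun k hk => ?_) fun ω => ?_).symm
  · have hne : ∀ ω, g ω ≠ k := fun ω h => hk ⟨ω, h⟩
    simp [hne]
  · classical
    simp [hg.eq_iff]

lemma condKL_id_eq {K : Type*} [Fintype K] [DecidableEq Ω] [DecidableEq K] {Pt P : Ω → ℝ}
    (hPt0 : ∀ ω, 0 ≤ Pt ω) (hP0 : ∀ ω, 0 ≤ P ω) (hac : ∀ ω, Pt ω ≠ 0 → 0 < P ω) (g : Ω → K) :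
    condKL Pt P g (fun ω => ω) = ∑ ω, Pt ω * log (Pt ω / P ω) - lawKL Pt P g := by
  rw [condKL_eq_lawKL_sub hPt0 hP0 hac, lawKL_of_injective Pt P fun _ _ h => (Prod.ext_iff.1 h).2]

lemma lawKL_const (Pt P : Ω → ℝ) :
    lawKL Pt P (fun _ => ()) = (∑ ω, Pt ω) * log ((∑ ω, Pt ω) / ∑ ω, P ω) := by
  simp [lawKL]

end Laws

section Conditioning

variable {Ω : Type*} [DecidableEq Ω] {P Pt : Ω → ℝ} {E : Finset Ω}

lemma cond_nonneg (hP0 : ∀ ω, 0 ≤ P ω)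
    (hPt : ∀ ω, Pt ω = if ω ∈ E then P ω / ∑ ω' ∈ E, P ω' else 0) (ω : Ω) : 0 ≤ Pt ω := by
  rw [hPt ω]
  split_ifs
  · exact div_nonneg (hP0 ω) (sum_nonneg fun ω _ => hP0 ω)
  · exact le_rfl

lemma cond_absolutelyContinuous (hP0 : ∀ ω, 0 ≤ P ω)
    (hPt : ∀ ω, Pt ω = if ω ∈ E then P ω / ∑ ω' ∈ E, P ω' else 0) (ω : Ω) (hω : Pt ω ≠ 0) :
    0 < P ω := by
  refine (hP0 ω).lt_of_ne' fun h => hω ?_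
  simp [hPt ω, h]

lemma sum_cond [Fintype Ω] (hE : ∑ ω ∈ E, P ω ≠ 0)
    (hPt : ∀ ω, Pt ω = if ω ∈ E then P ω / ∑ ω' ∈ E, P ω' else 0) : ∑ ω, Pt ω = 1 := by
  simp only [hPt]
  rw [sum_ite_mem, univ_inter, ← sum_div, div_self hE]

lemma sum_cond_mul_log_div [Fintype Ω] (hE : ∑ ω ∈ E, P ω ≠ 0)
    (hPt : ∀ ω, Pt ω = if ω ∈ E then P ω / ∑ ω' ∈ E, P ω' else 0) :
    ∑ ω, Pt ω * log (Pt ω / P ω) = -log (∑ ω ∈ E, P ω) := by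
  have hterm : ∀ ω, Pt ω * log (Pt ω / P ω) = Pt ω * -log (∑ ω ∈ E, P ω) := by
    intro ω
    rw [hPt ω]
    split_ifs
    · rcases eq_or_ne (P ω) 0 with h | h
      · simp [h]
      · rw [div_div_cancel_left' h, log_inv]
    · simp
  rw [sum_congr rfl fun ω _ => hterm ω, ← sum_mul, sum_cond hE hPt, one_mul]

end Conditioning

/-- Chain rule for the partition potential: with `P̃ = P|E`, `P(E) = e^{−Δ}`,
`Φ(Π) = E_{π←P̃_{Π(X)}}[d_KL(P̃_{X|X∈π} ‖ P_{X|X∈π})]`, refining the partition `Π`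
(fibers of `c`) by the level sets of `φ` gives
`Φ(Π') ≤ Φ(Π) − d_KL(P̃_{φ(X)|Π(X)} ‖ P_{φ(X)|Π(X)})`; moreover for the trivial
partition `Π₀` one has `Φ(Π₀) = Δ`. -/
theorem stmt_16 {Ω I J : Type*} [Fintype Ω] [Fintype I] [Fintype J]
    [DecidableEq Ω] [DecidableEq I] [DecidableEq J]
    (P : Ω → ℝ) (E : Finset Ω) (Δ : ℝ)
    (hP0 : ∀ ω, 0 ≤ P ω) (hP1 : ∑ ω, P ω = 1)
    (hΔ : ∑ ω ∈ E, P ω = Real.exp (-Δ))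
    (Pt : Ω → ℝ)
    (hPt : ∀ ω, Pt ω = if ω ∈ E then P ω / ∑ ω' ∈ E, P ω' else 0)
    (c : Ω → I) (φ : Ω → J) :
    condKL Pt P (fun ω => (c ω, φ ω)) (fun ω => ω) ≤
        condKL Pt P c (fun ω => ω) - condKL Pt P c φ ∧
      condKL Pt P (fun _ => ()) (fun ω => ω) = Δ := by
  have hE : ∑ ω ∈ E, P ω ≠ 0 := by rw [hΔ]; exact (exp_pos _).ne'
  have hPt0 := cond_nonneg hP0 hPt
  have hac := cond_absolutelyContinuous hP0 hPt
  have hdiv : ∑ ω, Pt ω * log (Pt ω / P ω) = Δ := by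
    rw [sum_cond_mul_log_div hE hPt, hΔ, log_exp, neg_neg]
  refine ⟨?_, ?_⟩
  · rw [condKL_id_eq hPt0 hP0 hac, condKL_id_eq hPt0 hP0 hac, condKL_eq_lawKL_sub hPt0 hP0 hac]
    linarith
  · rw [condKL_id_eq hPt0 hP0 hac, lawKL_const, sum_cond hE hPt, hP1, hdiv]
    simp
end

section
/- Let G = (𝒳, 𝒴, Q, W) be a k-player game with finite question alphabet 𝒳 and answer alphabet 𝒴, let P = Q^n. Suppose ρ : ℤ⁺ → ℝ satisfies ρ(n) ≥ e^{−O(n)} and ε > 0 is a constant such that for every product event E = E_1 × ⋯ × E_k ⊆ (𝒳^n)^k with P(E) ≥ ρ(n), there exists a coordinate j with v^j(G^n | (P|E)) ≤ 1 − ε. Then the value of the n-fold parallel repetition satisfies v(G^n) ≤ ρ(n)^{Ω(1)}. -/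
/-!
Density increment. Let `v` be the probability of winning every coordinate. We keep a product
event `E` on which the winning probability is at least `γ ^ s * v`, `γ = (1 - ε/2) / (1 - ε) > 1`,
while `E` still carries `(ε / 2M) ^ s * v` of the winning mass, `M = |𝒳^k × 𝒴^k|`. While
`P(E) ≥ ρ`, some coordinate `j` is won on `E` with probability at most `1 - ε`; splitting `E`
along the `M` possible questions and answers in coordinate `j` gives product events, and
averaging finds one that is won in coordinate `j`, keeps a `ε / 2M` fraction of the winning mass
and multiplies the winning probability by `γ`. A probability is at most `1`, so after
`s ≈ log_γ (1/v)` steps we get `P(E) < ρ`, i.e. `v ≤ (2M/ε) ^ s * ρ ≈ v ^ (-log_γ (2M/ε)) * ρ`.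
-/

open Finset Real

namespace ParallelRepetition

lemma le_mul_rpow_of_forall_one_lt_pow_mul {v r γ D : ℝ} (hv1 : v ≤ 1) (hγ : 1 < γ)
    (hD : 1 ≤ D) (hr : 0 ≤ r) (h : ∀ s : ℕ, 1 < γ ^ s * v → v ≤ D ^ s * r) :
    v ≤ D * r ^ (1 + logb γ D)⁻¹ := by
  rcases le_or_gt v 0 with hv | hv
  · exact hv.trans (by positivity)
  set β := logb γ D
  have hβ : 0 ≤ β := logb_nonneg hγ hD
  obtain ⟨s, hs, hs1⟩ := exists_nat_pow_near (one_le_one_div hv hv1) hγ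
  have hDs : D ^ s ≤ v ^ (-β) := by
    have hγ0 : 0 ≤ γ := by positivity
    calc D ^ s = (γ ^ s) ^ β := by
          rw [← rpow_logb (by positivity) hγ.ne' (by positivity : 0 < D), ← rpow_natCast,
            ← rpow_natCast, ← rpow_mul hγ0, ← rpow_mul hγ0, mul_comm]
      _ ≤ (1 / v) ^ β := rpow_le_rpow (by positivity) hs hβ
      _ = v ^ (-β) := by rw [rpow_neg hv.le, one_div, inv_rpow hv.le]
  have hv_le : v ≤ D * v ^ (-β) * r := by
    calc v ≤ D ^ (s + 1) * r := h (s + 1) (by rwa [div_lt_iff₀ hv] at hs1)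
      _ = D * D ^ s * r := by ring
      _ ≤ D * v ^ (-β) * r := by gcongr
  have hpow : v ^ (1 + β) ≤ D * r := by
    calc v ^ (1 + β) = v * v ^ β := by rw [rpow_add hv, rpow_one]
      _ ≤ D * v ^ (-β) * r * v ^ β := by gcongr
      _ = D * r := by rw [rpow_neg hv.le]; field_simp
  calc v = (v ^ (1 + β)) ^ (1 + β)⁻¹ := by
        rw [← rpow_mul hv.le, mul_inv_cancel₀ (by positivity), rpow_one]
    _ ≤ (D * r) ^ (1 + β)⁻¹ := by gcongr
    _ = D ^ (1 + β)⁻¹ * r ^ (1 + β)⁻¹ := mul_rpow (by positivity) hr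
    _ ≤ D * r ^ (1 + β)⁻¹ := by
        gcongr
        exact rpow_le_self_of_one_le hD (inv_le_one_of_one_le₀ (by linarith))

lemma exists_sum_le_card_mul {I : Type*} [Fintype I] [Nonempty I] (φ : I → ℝ) :
    ∃ m, ∑ i, φ i ≤ Fintype.card I * φ m := by
  obtain ⟨m, -, hm⟩ := exists_max_image univ φ univ_nonempty
  refine ⟨m, ?_⟩
  simpa using sum_le_card_nsmul univ φ (φ m) fun i _ => hm i (mem_univ i)

/-- The index maximising `A m * ∑ B - (1 - ε / 2) * (∑ A) * B m` works, because these
numbers sum to `ε / 2 * (∑ A) * (∑ B)`. -/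
lemma exists_large_index_of_ratio {I : Type*} [Fintype I] {A B : I → ℝ} (hB : ∀ m, 0 ≤ B m)
    (hA : 0 < ∑ m, A m) (hB' : 0 < ∑ m, B m) {ε : ℝ} (hε : 0 < ε) (hε2 : ε ≤ 2) :
    ∃ m, 0 < A m ∧ ε / (2 * Fintype.card I) * ∑ m, A m ≤ A m ∧
      (1 - ε / 2) * (∑ m, A m) * B m ≤ A m * ∑ m, B m := by
  set T := ∑ m, A m
  set U := ∑ m, B m
  obtain ⟨m₀, -⟩ := nonempty_of_sum_ne_zero hA.ne'
  have : Nonempty I := ⟨m₀⟩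
  have hcard : (0 : ℝ) < Fintype.card I := by exact_mod_cast Fintype.card_pos
  obtain ⟨m, hm⟩ := exists_sum_le_card_mul fun m => A m * U - (1 - ε / 2) * T * B m
  rw [sum_sub_distrib, ← sum_mul, ← mul_sum] at hm
  change T * U - (1 - ε / 2) * T * U ≤ _ at hm
  have hBm : 0 ≤ (1 - ε / 2) * T * B m := mul_nonneg (by nlinarith) (hB m)
  have hφm : 0 < A m * U - (1 - ε / 2) * T * B m :=
    have hsum : 0 < T * U - (1 - ε / 2) * T * U := by nlinarith [mul_pos (mul_pos hε hA) hB']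
    pos_of_mul_pos_right (hsum.trans_le hm) hcard.le
  have hAm : ε / (2 * Fintype.card I) * T * U ≤ A m * U := by
    rw [div_mul_eq_mul_div, div_mul_eq_mul_div, div_le_iff₀ (by positivity)]
    nlinarith
  exact ⟨m, pos_of_mul_pos_left (by linarith) hB'.le, le_of_mul_le_mul_right hAm hB', by linarith⟩

variable {Ω I : Type*} [DecidableEq Ω] [Fintype I] [DecidableEq I] {w : Ω → ℝ}

theorem exists_fiber_density_increment (hw : ∀ x, 0 ≤ w x) {W E : Finset Ω} {g : Ω → I}
    {S : Finset I} (hWS : ∀ x ∈ W, g x ∈ S) {ε : ℝ} (hε : 0 < ε) (hε1 : ε < 1)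
    (hE : ∑ x ∈ E with g x ∈ S, w x ≤ (1 - ε) * ∑ x ∈ E, w x)
    (hWE : 0 < ∑ x ∈ W ∩ E, w x) :
    ∃ m, ε / (2 * Fintype.card I) * ∑ x ∈ W ∩ E, w x ≤ ∑ x ∈ W ∩ {x ∈ E | g x = m}, w x ∧
      (1 - ε / 2) / (1 - ε) * (∑ x ∈ W ∩ E, w x) * ∑ x ∈ E with g x = m, w x ≤
        (∑ x ∈ W ∩ {x ∈ E | g x = m}, w x) * ∑ x ∈ E, w x := by
  have hA : ∑ m, ∑ x ∈ W ∩ {x ∈ E | g x = m}, w x = ∑ x ∈ W ∩ E, w x := by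
    simp only [inter_filter]; exact sum_fiberwise _ _ _
  have hB : ∑ m, ∑ x ∈ {x ∈ E | g x ∈ S} with g x = m, w x = ∑ x ∈ E with g x ∈ S, w x :=
    sum_fiberwise _ _ _
  have hWE_le : ∑ x ∈ W ∩ E, w x ≤ ∑ x ∈ E with g x ∈ S, w x :=
    sum_le_sum_of_subset_of_nonneg (fun x hx => mem_filter.2 ⟨(mem_inter.1 hx).2,
      hWS x (mem_inter.1 hx).1⟩) fun x _ _ => hw x
  obtain ⟨m, hpos, hlarge, hratio⟩ := exists_large_index_of_ratio
    (fun m => sum_nonneg fun x _ => hw x) (hA ▸ hWE) (hB ▸ hWE.trans_le hWE_le) hε (by linarith)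
  rw [hA] at hlarge
  rw [hA, hB] at hratio
  -- the chosen fibre meets `W`, hence lies inside `g ⁻¹ S`
  have hmS : m ∈ S := by
    obtain ⟨x, hx⟩ := nonempty_of_sum_ne_zero hpos.ne'
    simp only [mem_inter, mem_filter] at hx
    exact hx.2.2 ▸ hWS x hx.1
  have hfiber : {x ∈ {x ∈ E | g x ∈ S} | g x = m} = {x ∈ E | g x = m} := by
    rw [filter_filter]
    exact filter_congr fun x _ => ⟨And.right, fun h => ⟨h ▸ hmS, h⟩⟩
  rw [hfiber] at hratio
  refine ⟨m, hlarge, ?_⟩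
  rw [div_mul_eq_mul_div, div_mul_eq_mul_div, div_le_iff₀ (by linarith)]
  calc _ ≤ _ := hratio
    _ ≤ (∑ x ∈ W ∩ {x ∈ E | g x = m}, w x) * ((1 - ε) * ∑ x ∈ E, w x) := by gcongr
    _ = _ := by ring

variable (I) in
def HasLosingSplit (w : Ω → ℝ) (W : Finset Ω) (Adm : Finset Ω → Prop) (ε r : ℝ) : Prop :=
  ∀ E, Adm E → r ≤ ∑ x ∈ E, w x → ∃ (g : Ω → I) (S : Finset I),
    (∀ x ∈ W, g x ∈ S) ∧ ∑ x ∈ E with g x ∈ S, w x ≤ (1 - ε) * ∑ x ∈ E, w x ∧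
      ∀ m, Adm {x ∈ E | g x = m}

variable [Fintype Ω] [Nonempty I] {W : Finset Ω} {Adm : Finset Ω → Prop} {ε r : ℝ}

theorem exists_dense_event_of_pow_mul_lt (hw : ∀ x, 0 ≤ w x) (hw1 : ∑ x, w x = 1) (hAdm : Adm univ)
    (hε : 0 < ε) (hε1 : ε < 1) (hr : 0 ≤ r)
    (hsplit : HasLosingSplit I w W Adm ε r)
    (s : ℕ) (hs : (2 * Fintype.card I / ε) ^ s * r < ∑ x ∈ W, w x) :
    ∃ E, Adm E ∧ ((1 - ε / 2) / (1 - ε)) ^ s * (∑ x ∈ W, w x) * ∑ x ∈ E, w x ≤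
        ∑ x ∈ W ∩ E, w x ∧
      (ε / (2 * Fintype.card I)) ^ s * ∑ x ∈ W, w x ≤ ∑ x ∈ W ∩ E, w x := by
  set v := ∑ x ∈ W, w x
  have hcard : (1 : ℝ) ≤ Fintype.card I := by exact_mod_cast Fintype.card_pos
  have hD : 1 ≤ 2 * Fintype.card I / ε := by rw [le_div_iff₀ hε]; linarith
  induction s with
  | zero => exact ⟨univ, hAdm, by simp [hw1, v], by simp [v]⟩
  | succ s ih =>
    obtain ⟨E, hE, hratio, hmass⟩ := ih <| lt_of_le_of_lt
      (mul_le_mul_of_nonneg_right (pow_le_pow_right₀ hD s.le_succ) hr) hs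
    have hWE_le : ∑ x ∈ W ∩ E, w x ≤ ∑ x ∈ E, w x :=
      sum_le_sum_of_subset_of_nonneg inter_subset_right fun x _ _ => hw x
    have hrE : r ≤ ∑ x ∈ E, w x := by
      have hcancel : (ε / (2 * Fintype.card I)) ^ s * (2 * Fintype.card I / ε) ^ s = 1 := by
        rw [← mul_pow, div_mul_div_cancel₀ (by positivity), div_self hε.ne', one_pow]
      calc r ≤ (ε / (2 * Fintype.card I)) ^ s * ((2 * Fintype.card I / ε) ^ (s + 1) * r) := by
            rw [pow_succ, ← mul_assoc, ← mul_assoc, hcancel, one_mul]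
            exact le_mul_of_one_le_left hr hD
        _ ≤ (ε / (2 * Fintype.card I)) ^ s * v := by gcongr
        _ ≤ ∑ x ∈ E, w x := hmass.trans hWE_le
    obtain ⟨g, S, hWS, hES, hAdm'⟩ := hsplit E hE hrE
    have hv : 0 < v := lt_of_le_of_lt (by positivity) hs
    have hWE : 0 < ∑ x ∈ W ∩ E, w x := lt_of_lt_of_le (by positivity) hmass
    obtain ⟨m, hmass', hratio'⟩ := exists_fiber_density_increment hw hWS hε hε1 hES hWE
    refine ⟨_, hAdm' m, ?_, ?_⟩
    · have hγ : 0 ≤ (1 - ε / 2) / (1 - ε) := div_nonneg (by linarith) (by linarith)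
      have hE' : 0 ≤ ∑ x ∈ E with g x = m, w x := sum_nonneg fun x _ => hw x
      refine le_of_mul_le_mul_right ?_ (hWE.trans_le hWE_le)
      calc ((1 - ε / 2) / (1 - ε)) ^ (s + 1) * v * (∑ x ∈ E with g x = m, w x) *
            ∑ x ∈ E, w x
          = (1 - ε / 2) / (1 - ε) * (∑ x ∈ E with g x = m, w x) *
            (((1 - ε / 2) / (1 - ε)) ^ s * v * ∑ x ∈ E, w x) := by ring
        _ ≤ (1 - ε / 2) / (1 - ε) * (∑ x ∈ E with g x = m, w x) * ∑ x ∈ W ∩ E, w x := by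
          gcongr
        _ ≤ _ := by linarith
    · calc (ε / (2 * Fintype.card I)) ^ (s + 1) * v
          = ε / (2 * Fintype.card I) * ((ε / (2 * Fintype.card I)) ^ s * v) := by ring
        _ ≤ ε / (2 * Fintype.card I) * ∑ x ∈ W ∩ E, w x := by gcongr
        _ ≤ _ := hmass'

theorem sum_le_mul_rpow_of_hasLosingSplit (hw : ∀ x, 0 ≤ w x) (hw1 : ∑ x, w x = 1)
    (hAdm : Adm univ) (hε : 0 < ε) (hε1 : ε < 1) (hr : 0 ≤ r)
    (hsplit : HasLosingSplit I w W Adm ε r) :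
    ∑ x ∈ W, w x ≤ 2 * Fintype.card I / ε *
      r ^ (1 + logb ((1 - ε / 2) / (1 - ε)) (2 * Fintype.card I / ε))⁻¹ := by
  have hcard : (1 : ℝ) ≤ Fintype.card I := by exact_mod_cast Fintype.card_pos
  refine le_mul_rpow_of_forall_one_lt_pow_mul ?_ ?_ ?_ hr fun s hs => ?_
  · exact hw1 ▸ sum_le_sum_of_subset_of_nonneg (subset_univ W) fun x _ _ => hw x
  · rw [one_lt_div (by linarith)]; linarith
  · rw [le_div_iff₀ hε]; linarith
  by_contra! hlt
  obtain ⟨E, -, hratio, hmass⟩ := exists_dense_event_of_pow_mul_lt hw hw1 hAdm hε hε1 hr hsplit s hlt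
  have hWE_le : ∑ x ∈ W ∩ E, w x ≤ ∑ x ∈ E, w x :=
    sum_le_sum_of_subset_of_nonneg inter_subset_right fun x _ _ => hw x
  have hv : 0 < ∑ x ∈ W, w x := lt_of_le_of_lt (by positivity) hlt
  have hWE : 0 < ∑ x ∈ W ∩ E, w x := lt_of_lt_of_le (by positivity) hmass
  nlinarith [hratio.trans hWE_le]

section Game

variable {𝒳 𝒴 : Type*} [Fintype 𝒳] [DecidableEq 𝒳] {k n : ℕ}

def productEvent (E : Fin k → Finset (Fin n → 𝒳)) : Finset (Fin n → Fin k → 𝒳) :=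
  {x | ∀ i, (fun j => x j i) ∈ E i}

def roundAt (f : Fin k → (Fin n → 𝒳) → Fin n → 𝒴) (j : Fin n) (x : Fin n → Fin k → 𝒳) :
    (Fin k → 𝒳) × (Fin k → 𝒴) :=
  (x j, fun i => f i (fun j' => x j' i) j)

lemma filter_productEvent_roundAt [DecidableEq 𝒴] (E : Fin k → Finset (Fin n → 𝒳))
    (f : Fin k → (Fin n → 𝒳) → Fin n → 𝒴) (j : Fin n) (m : (Fin k → 𝒳) × (Fin k → 𝒴)) :
    {x ∈ productEvent E | roundAt f j x = m} =
      productEvent fun i => {y ∈ E i | y j = m.1 i ∧ f i y j = m.2 i} := by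
  ext x
  simp only [productEvent, roundAt, mem_filter, mem_univ, true_and, Prod.ext_iff, funext_iff]
  grind

theorem hasLosingSplit_productEvent [Fintype 𝒴] [DecidableEq 𝒴] {Q : (Fin k → 𝒳) → ℝ}
    {Win : (Fin k → 𝒳) → (Fin k → 𝒴) → Bool} (f : Fin k → (Fin n → 𝒳) → Fin n → 𝒴) {ε r : ℝ}
    (h : ∀ E, r ≤ ∑ x ∈ productEvent E, ∏ j, Q (x j) → ∃ j,
      ∑ x ∈ productEvent E with Win (x j) (fun i => f i (fun j' => x j' i) j) = true,
        ∏ j, Q (x j) ≤ (1 - ε) * ∑ x ∈ productEvent E, ∏ j, Q (x j)) :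
    HasLosingSplit ((Fin k → 𝒳) × (Fin k → 𝒴)) (fun x => ∏ j, Q (x j))
      {x | ∀ j, Win (x j) (fun i => f i (fun j' => x j' i) j) = true}
      (fun E => ∃ Es, E = productEvent Es) ε r := by
  rintro _ ⟨E, rfl⟩ hE
  obtain ⟨j, hj⟩ := h E hE
  refine ⟨roundAt f j, ({m | Win.uncurry m} : Finset _), fun x hx => ?_, ?_,
    fun m => ⟨_, filter_productEvent_roundAt E f j m⟩⟩
  · simp only [mem_filter, mem_univ, true_and] at hx ⊢
    exact hx j
  · simpa only [roundAt, mem_filter, mem_univ, true_and, Function.uncurry_apply_pair] using hj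

end Game

end ParallelRepetition

open Finset Real ParallelRepetition in
/-- Parallel repetition criterion.  `G = (𝒳, 𝒴, Q, Win)` is a `k`-player game with
query distribution `Q` and winning predicate `Win`.  For the `n`-fold repetition,
questions are `x : Fin n → (Fin k → 𝒳)` with weight `∏ⱼ Q(xⱼ)`, and a (product)
strategy is `f : Fin k → (Fin n → 𝒳) → (Fin n → 𝒴)`.  Suppose `ρ(n) ≥ e^{−O(n)}`
and `ε > 0` are such that for every `n ≥ 1` and every product event
`E = E₁ × ⋯ × E_k` with `Qⁿ(E) ≥ ρ(n)`, some coordinate `j` has conditioned value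
`v^j(Gⁿ | (Qⁿ|E)) ≤ 1 − ε`.  Then `v(Gⁿ) ≤ K·ρ(n)^c` for constants `K, c > 0`,
i.e. `v(Gⁿ) ≤ ρ(n)^{Ω(1)}`. -/
theorem stmt_17 (𝒳 𝒴 : Type) [Fintype 𝒳] [Fintype 𝒴] [DecidableEq 𝒳] [DecidableEq 𝒴]
    [Nonempty 𝒳] [Nonempty 𝒴] (k : ℕ)
    (Q : (Fin k → 𝒳) → ℝ) (hQ0 : ∀ q, 0 ≤ Q q) (hQ1 : ∑ q, Q q = 1)
    (Win : (Fin k → 𝒳) → (Fin k → 𝒴) → Bool)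
    (ρ : ℕ → ℝ) (ε : ℝ) (hε : 0 < ε)
    (hρ : ∃ C : ℝ, 0 < C ∧ ∀ n : ℕ, 1 ≤ n → Real.exp (-(C * n)) ≤ ρ n)
    (hcrit : ∀ n : ℕ, 1 ≤ n → ∀ E : Fin k → Finset (Fin n → 𝒳),
      ρ n ≤ (∑ x : Fin n → Fin k → 𝒳,
        if ∀ i : Fin k, (fun j => x j i) ∈ E i then ∏ j, Q (x j) else 0) →
      ∃ j : Fin n, ∀ f : Fin k → (Fin n → 𝒳) → Fin n → 𝒴,
        (∑ x : Fin n → Fin k → 𝒳,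
            if (∀ i : Fin k, (fun j' => x j' i) ∈ E i) ∧
                Win (x j) (fun i => f i (fun j' => x j' i) j) = true
            then ∏ j', Q (x j') else 0) /
          (∑ x : Fin n → Fin k → 𝒳,
            if ∀ i : Fin k, (fun j' => x j' i) ∈ E i then ∏ j', Q (x j') else 0)
          ≤ 1 - ε) :
    ∃ c K : ℝ, 0 < c ∧ 0 < K ∧ ∀ n : ℕ, 1 ≤ n →
      ∀ f : Fin k → (Fin n → 𝒳) → Fin n → 𝒴,
        (∑ x : Fin n → Fin k → 𝒳,
          if ∀ j : Fin n, Win (x j) (fun i => f i (fun j' => x j' i) j) = true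
          then ∏ j, Q (x j) else 0) ≤ K * ρ n ^ c := by
  obtain ⟨C, -, hρC⟩ := hρ
  set δ := min ε (1 / 2)
  have hδ : 0 < δ := lt_min hε (by norm_num)
  have hδ1 : δ < 1 := (min_le_right _ _).trans_lt (by norm_num)
  set M : ℝ := ↑(Fintype.card ((Fin k → 𝒳) × (Fin k → 𝒴)))
  have hM : 1 ≤ M := Nat.one_le_cast.2 Fintype.card_pos
  refine ⟨(1 + logb ((1 - δ / 2) / (1 - δ)) (2 * M / δ))⁻¹, 2 * M / δ, ?_, by positivity,
    fun n hn f => ?_⟩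
  · have : 0 ≤ logb ((1 - δ / 2) / (1 - δ)) (2 * M / δ) :=
      logb_nonneg (by rw [one_lt_div (by linarith)]; linarith) (by rw [le_div_iff₀ hδ]; linarith)
    positivity
  have hρn : 0 < ρ n := (exp_pos _).trans_le (hρC n hn)
  rw [← sum_filter]
  refine sum_le_mul_rpow_of_hasLosingSplit (fun x => prod_nonneg fun j _ => hQ0 _)
    (by rw [← Fintype.sum_pow Q n, hQ1, one_pow]) ⟨fun _ => univ, by simp [productEvent]⟩ hδ hδ1
    hρn.le (hasLosingSplit_productEvent f fun E hE => ?_)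
  have hEpos : 0 < ∑ x ∈ productEvent E, ∏ j, Q (x j) := hρn.trans_le hE
  obtain ⟨j, hj⟩ := hcrit n hn E (by rwa [← sum_filter])
  refine ⟨j, ?_⟩
  have hwin := hj f
  rw [← sum_filter, ← sum_filter, ← productEvent, div_le_iff₀ hEpos] at hwin
  calc _ = _ := by simp only [productEvent, filter_filter]
    _ ≤ _ := hwin
    _ ≤ (1 - δ) * ∑ x ∈ productEvent E, ∏ j, Q (x j) := by gcongr; exact min_le_left _ _
end
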